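/- arXiv:2011.00229 — 14 statements merged into one kernel-verified Lean document; each statement's English description precedes it below -/
import Mathlib

section
/- The permutations σ_{(a,i)} pairwise commute: for all (a,i), (b,j) ∈ X, σ_{(a,i)} ∘ σ_{(b,j)} = σ_{(b,j)} ∘ σ_{(a,i)}. Hence the subgroup G(X) of Sym(X) generated by {σ_x : x ∈ X} is abelian. -/
/-- The map `σ_{(a,i)}((b,j)) = (b - ar + i, j + ir - ar² + 1)` of the solution `C(n₁,n₂,r)`. -/
def Csigma {n₁ n₂ : ℕ} (hd : n₁ ∣ n₂) (r : ℕ)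
    (x y : ZMod n₁ × ZMod n₂) : ZMod n₁ × ZMod n₂ :=
  (y.1 - x.1 * (r : ZMod n₁) + ZMod.castHom hd (ZMod n₁) x.2,
   y.2 + x.2 * (r : ZMod n₂) - (x.1.val : ZMod n₂) * (r : ZMod n₂) ^ 2 + 1)

/-- `σ_{(a,i)}` as a permutation: it is translation by a constant. -/
def CsigmaPerm {n₁ n₂ : ℕ} (hd : n₁ ∣ n₂) (r : ℕ) (x : ZMod n₁ × ZMod n₂) :
    Equiv.Perm (ZMod n₁ × ZMod n₂) :=
  Equiv.addLeft (ZMod.castHom hd (ZMod n₁) x.2 - x.1 * (r : ZMod n₁),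
    x.2 * (r : ZMod n₂) - (x.1.val : ZMod n₂) * (r : ZMod n₂) ^ 2 + 1)

/-- the maps `σ_x` pairwise commute, hence the permutation group
`G(X) = ⟨σ_x : x ∈ X⟩` is abelian. -/
theorem Csigma_commute (n₁ n₂ r : ℕ) (h1 : 0 < n₁) (h2 : 0 < n₂) (hd : n₁ ∣ n₂)
    (hr : r < n₂ / n₁) (hr2 : n₂ ∣ n₁ * r ^ 2) :
    (∀ x, ⇑(CsigmaPerm hd r x) = Csigma hd r x) ∧
    (∀ x y : ZMod n₁ × ZMod n₂,
      Csigma hd r x ∘ Csigma hd r y = Csigma hd r y ∘ Csigma hd r x) ∧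
    (∀ g ∈ Subgroup.closure (Set.range (CsigmaPerm hd r)),
     ∀ g' ∈ Subgroup.closure (Set.range (CsigmaPerm hd r)), Commute g g') := by

  refine ⟨?_, ?_, ?_⟩
  · intro x
    funext y
    simp [CsigmaPerm, Csigma, Prod.ext_iff]
    constructor <;> ring
  · intro x y
    funext z
    simp [Csigma, Prod.ext_iff]
    constructor <;> ring
  · have hcomm : ∀ a b : Equiv.Perm (ZMod n₁ × ZMod n₂),
        a ∈ Set.range (CsigmaPerm hd r) → b ∈ Set.range (CsigmaPerm hd r) → Commute a b := by
      rintro a b ⟨x, rfl⟩ ⟨y, rfl⟩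
      unfold CsigmaPerm
      rw [Commute, SemiconjBy]
      ext z <;> simp <;> ring
    intro g hg g' hg'
    induction hg using Subgroup.closure_induction with
    | mem a ha =>
      induction hg' using Subgroup.closure_induction with
      | mem b hb => exact hcomm a b ha hb
      | one => exact Commute.one_right a
      | mul b c _ _ hb hc => exact (hb).mul_right hc
      | inv b _ hb => exact hb.inv_right
    | one => exact Commute.one_left g'
    | mul a b _ _ ha hb => exact (ha).mul_left hb
    | inv a _ ha => exact ha.inv_left
end

section
/- The solution C(n₁,n₂,r) has multipermutational level at most 2: for all x, y, z ∈ X, σ_{σ_y(x)} = σ_{σ_z(x)}. Explicitly, σ_{σ_{(a,i)}((b,j))}((c,k)) = (c - br + j + 1, k + jr + r - br² + 1), independent of (a,i). -/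
/-- `C(n₁,n₂,r)` has multipermutational level at most 2:
`σ_{σ_y(x)} = σ_{σ_z(x)}`, with the explicit formula independent of `(a,i)`. -/
theorem Csigma_mpl_le_two (n₁ n₂ r : ℕ) (h1 : 0 < n₁) (h2 : 0 < n₂) (hd : n₁ ∣ n₂)
    (hr : r < n₂ / n₁) (hr2 : n₂ ∣ n₁ * r ^ 2) :
    (∀ x y z : ZMod n₁ × ZMod n₂,
      Csigma hd r (Csigma hd r y x) = Csigma hd r (Csigma hd r z x)) ∧
    (∀ (a b c : ZMod n₁) (i j k : ZMod n₂),
      Csigma hd r (Csigma hd r (a, i) (b, j)) (c, k) =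
        (c - b * (r : ZMod n₁) + ZMod.castHom hd (ZMod n₁) j + 1,
         k + j * (r : ZMod n₂) + (r : ZMod n₂) - (b.val : ZMod n₂) * (r : ZMod n₂) ^ 2 + 1)) := by
  haveI : NeZero n₁ := ⟨h1.ne'⟩
  haveI : NeZero n₂ := ⟨h2.ne'⟩
  have hn1 : (n₁ : ZMod n₂) * (r : ZMod n₂) ^ 2 = 0 := by
    have h : ((n₁ * r ^ 2 : ℕ) : ZMod n₂) = 0 :=
      (ZMod.natCast_eq_zero_iff _ _).2 hr2
    push_cast at h
    linear_combination h
  have key : ∀ z : ℤ, (((z : ZMod n₁).val : ZMod n₂)) * (r : ZMod n₂) ^ 2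
      = (z : ZMod n₂) * (r : ZMod n₂) ^ 2 := by
    intro z
    obtain ⟨t, ht⟩ : (n₁ : ℤ) ∣ z - ((z : ZMod n₁).val : ℤ) := by
      have h : ((z - ((z : ZMod n₁).val : ℤ) : ℤ) : ZMod n₁) = 0 := by
        push_cast
        simp [ZMod.natCast_val, ZMod.cast_id]
      exact (ZMod.intCast_zmod_eq_zero_iff_dvd _ _).1 h
    have hz : (z : ZMod n₂) = (((z : ZMod n₁).val : ZMod n₂)) + (n₁ : ZMod n₂) * t := by
      have hz' : z = ((z : ZMod n₁).val : ℤ) + (n₁ : ℤ) * t := by linarith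
      have := congrArg (fun w : ℤ => (w : ZMod n₂)) hz'
      push_cast at this
      exact this
    rw [hz]
    linear_combination (-(t : ZMod n₂)) * hn1
  have main : ∀ (a b c : ZMod n₁) (i j k : ZMod n₂),
      Csigma hd r (Csigma hd r (a, i) (b, j)) (c, k) =
        (c - b * (r : ZMod n₁) + ZMod.castHom hd (ZMod n₁) j + 1,
         k + j * (r : ZMod n₂) + (r : ZMod n₂) - (b.val : ZMod n₂) * (r : ZMod n₂) ^ 2 + 1) := by
    intro a b c i j k
    simp only [Csigma, Prod.mk.injEq]
    have hcastA : (ZMod.castHom hd (ZMod n₁)) ((a.val : ZMod n₂)) = a := by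
      rw [map_natCast]
      simp [ZMod.natCast_val, ZMod.cast_id]
    have hcastI : (ZMod.castHom hd (ZMod n₁)) i = ((i.val : ℕ) : ZMod n₁) := by
      simp [ZMod.natCast_val, ZMod.cast_id]
    constructor
    · simp only [map_add, map_sub, map_mul, map_pow, map_one, map_natCast]
      simp only [ZMod.natCast_val, ZMod.cast_id]
      ring
    · have hV : (b - a * (r : ZMod n₁) + (ZMod.castHom hd (ZMod n₁)) i)
          = (((b.val : ℤ) - (a.val : ℤ) * r + (i.val : ℤ) : ℤ) : ZMod n₁) := by
        rw [hcastI]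
        push_cast
        simp [ZMod.natCast_val, ZMod.cast_id]
      rw [hV, key]
      have hi : ((i.val : ℕ) : ZMod n₂) = i := by
        simp [ZMod.natCast_val, ZMod.cast_id]
      push_cast
      rw [hi]
      ring
  refine ⟨?_, main⟩
  rintro ⟨b, j⟩ ⟨a, i⟩ ⟨a', i'⟩
  funext w
  obtain ⟨c, k⟩ := w
  rw [main a b c i j k, main a' b c i' j k]
end

section
/- The group G(X) generated by the σ_x acts transitively on X = ℤ/n₁ × ℤ/n₂: for all (a,i),(b,j) there is g ∈ G(X) with g((a,i)) = (b,j). Specifically, σ_{(0,0)}^j ∘ (σ_{(0,1)} σ_{(0,0)}^{-r-1})^b sends (a,i) to (a+b, i+j). -/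
/-!
Every `σ_x` is a translation of the group `ZMod n₁ × ZMod n₂`. In particular `σ_{(0,0)}` is
translation by `(0, 1)` and `σ_{(0,1)}` translation by `(1, r + 1)`, so
`σ_{(0,1)} σ_{(0,0)}^{-r-1}` is translation by `(1, 0)`. These two translations generate the
whole translation group, which acts simply transitively.
-/

section
variable {n₁ n₂ : ℕ} (hd : n₁ ∣ n₂) (r : ℕ)

theorem coe_CsigmaPerm (x : ZMod n₁ × ZMod n₂) : ⇑(CsigmaPerm hd r x) = Csigma hd r x := by
  funext y
  simp only [CsigmaPerm, Csigma, Equiv.coe_addLeft, Prod.ext_iff, Prod.fst_add, Prod.snd_add]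
  constructor <;> ring

theorem CsigmaPerm_zero_zero : CsigmaPerm hd r (0, 0) = Equiv.addLeft (0, 1) := by
  simp [CsigmaPerm]

theorem CsigmaPerm_zero_one : CsigmaPerm hd r (0, 1) = Equiv.addLeft (1, (r : ZMod n₂) + 1) := by
  simp [CsigmaPerm, -ZMod.castHom_apply]

theorem CsigmaPerm_zero_one_mul_zero_zero_zpow :
    CsigmaPerm hd r (0, 1) * CsigmaPerm hd r (0, 0) ^ (-(r : ℤ) - 1) = Equiv.addLeft (1, 0) := by
  rw [CsigmaPerm_zero_one, CsigmaPerm_zero_zero, Equiv.zsmul_addLeft, ← Equiv.addLeft_add]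
  congr 1
  ext <;> simp

theorem Csigma_word_apply (a : ZMod n₁) (i : ZMod n₂) (b j : ℤ) :
    ((CsigmaPerm hd r (0, 0)) ^ j *
        (CsigmaPerm hd r (0, 1) * (CsigmaPerm hd r (0, 0)) ^ (-(r : ℤ) - 1)) ^ b) (a, i) =
      (a + (b : ZMod n₁), i + (j : ZMod n₂)) := by
  rw [CsigmaPerm_zero_one_mul_zero_zero_zpow, CsigmaPerm_zero_zero, Equiv.zsmul_addLeft,
    Equiv.zsmul_addLeft, Equiv.Perm.mul_apply]
  ext <;> simp <;> ring

theorem Csigma_word_mem_closure (b j : ℤ) :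
    (CsigmaPerm hd r (0, 0)) ^ j *
        (CsigmaPerm hd r (0, 1) * (CsigmaPerm hd r (0, 0)) ^ (-(r : ℤ) - 1)) ^ b ∈
      Subgroup.closure (Set.range (CsigmaPerm hd r)) := by
  have hσ (z) : CsigmaPerm hd r z ∈ Subgroup.closure (Set.range (CsigmaPerm hd r)) :=
    Subgroup.subset_closure (Set.mem_range_self z)
  exact mul_mem (zpow_mem (hσ _) _) (zpow_mem (mul_mem (hσ _) (zpow_mem (hσ _) _)) _)

end

theorem Csigma_transitive_general (n₁ n₂ r : ℕ) (hd : n₁ ∣ n₂) :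
    (∀ x, ⇑(CsigmaPerm hd r x) = Csigma hd r x) ∧
    (∀ x y : ZMod n₁ × ZMod n₂,
      ∃ g ∈ Subgroup.closure (Set.range (CsigmaPerm hd r)), g x = y) ∧
    (∀ (a : ZMod n₁) (i : ZMod n₂) (b j : ℤ),
      ((CsigmaPerm hd r ((0 : ZMod n₁), (0 : ZMod n₂))) ^ j *
        (CsigmaPerm hd r ((0 : ZMod n₁), (1 : ZMod n₂)) *
          (CsigmaPerm hd r ((0 : ZMod n₁), (0 : ZMod n₂))) ^ (-(r : ℤ) - 1)) ^ b) (a, i) =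
        (a + (b : ZMod n₁), i + (j : ZMod n₂))) := by
  refine ⟨coe_CsigmaPerm hd r, fun ⟨a, i⟩ ⟨b, j⟩ => ?_, Csigma_word_apply hd r⟩
  refine ⟨_, Csigma_word_mem_closure hd r (b - a).cast (j - i).cast, ?_⟩
  rw [Csigma_word_apply, ZMod.intCast_zmod_cast, ZMod.intCast_zmod_cast]
  ext <;> simp

/-- `G(X)` acts transitively on `X`; explicitly,
`σ_{(0,0)}^j ∘ (σ_{(0,1)} σ_{(0,0)}^{-r-1})^b` sends `(a,i)` to `(a+b, i+j)`. -/
theorem Csigma_transitive (n₁ n₂ r : ℕ) (h1 : 0 < n₁) (h2 : 0 < n₂) (hd : n₁ ∣ n₂)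
    (hr : r < n₂ / n₁) (hr2 : n₂ ∣ n₁ * r ^ 2) :
    (∀ x, ⇑(CsigmaPerm hd r x) = Csigma hd r x) ∧
    (∀ x y : ZMod n₁ × ZMod n₂,
      ∃ g ∈ Subgroup.closure (Set.range (CsigmaPerm hd r)), g x = y) ∧
    (∀ (a : ZMod n₁) (i : ZMod n₂) (b j : ℤ),
      ((CsigmaPerm hd r ((0 : ZMod n₁), (0 : ZMod n₂))) ^ j *
        (CsigmaPerm hd r ((0 : ZMod n₁), (1 : ZMod n₂)) *
          (CsigmaPerm hd r ((0 : ZMod n₁), (0 : ZMod n₂))) ^ (-(r : ℤ) - 1)) ^ b) (a, i) =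
        (a + (b : ZMod n₁), i + (j : ZMod n₂))) :=
  Csigma_transitive_general n₁ n₂ r hd
end

section
/- The permutation group G(X) of C(n₁,n₂,r) is isomorphic to ℤ/n₁ × ℤ/n₂. In particular σ_{(0,0)} has order n₂, the permutation λ = σ_{(0,1)}σ_{(0,0)}^{-r-1} (which maps (a,i) ↦ (a+1,i)) has order n₁, ⟨σ_{(0,0)}⟩ ∩ ⟨λ⟩ = {id}, and G(X) = ⟨λ⟩ × ⟨σ_{(0,0)}⟩. -/
/-- translation as a monoid hom into the permutation group -/
def tHom (A : Type*) [AddCommGroup A] : Multiplicative A →* Equiv.Perm A where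
  toFun a := Equiv.addLeft a.toAdd
  map_one' := by ext x; simp
  map_mul' a b := by ext x; simp [add_assoc]

lemma tHom_inj (A : Type*) [AddCommGroup A] : Function.Injective (tHom A) := by
  intro a b h
  have := congrArg (fun f => (f : Equiv.Perm A) 0) h
  simpa [tHom] using this


set_option maxHeartbeats 1000000 in
/-- `G(X) ≅ ℤ/n₁ × ℤ/n₂`; `σ_{(0,0)}` has order `n₂`,
`λ = σ_{(0,1)}σ_{(0,0)}^{-r-1}` maps `(a,i) ↦ (a+1,i)` and has order `n₁`,
`⟨σ_{(0,0)}⟩ ∩ ⟨λ⟩` is trivial, and `G(X) = ⟨λ, σ_{(0,0)}⟩`. -/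
theorem Csigma_perm_group (n₁ n₂ r : ℕ) (h1 : 0 < n₁) (h2 : 0 < n₂) (hd : n₁ ∣ n₂)
    (hr : r < n₂ / n₁) (hr2 : n₂ ∣ n₁ * r ^ 2) :
    (∀ x, ⇑(CsigmaPerm hd r x) = Csigma hd r x) ∧
    (∀ (a : ZMod n₁) (i : ZMod n₂),
      (CsigmaPerm hd r ((0 : ZMod n₁), (1 : ZMod n₂)) *
        (CsigmaPerm hd r ((0 : ZMod n₁), (0 : ZMod n₂))) ^ (-(r : ℤ) - 1)) (a, i) =
        (a + 1, i)) ∧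
    orderOf (CsigmaPerm hd r ((0 : ZMod n₁), (0 : ZMod n₂))) = n₂ ∧
    orderOf (CsigmaPerm hd r ((0 : ZMod n₁), (1 : ZMod n₂)) *
      (CsigmaPerm hd r ((0 : ZMod n₁), (0 : ZMod n₂))) ^ (-(r : ℤ) - 1)) = n₁ ∧
    Subgroup.zpowers (CsigmaPerm hd r ((0 : ZMod n₁), (0 : ZMod n₂))) ⊓
      Subgroup.zpowers (CsigmaPerm hd r ((0 : ZMod n₁), (1 : ZMod n₂)) *
        (CsigmaPerm hd r ((0 : ZMod n₁), (0 : ZMod n₂))) ^ (-(r : ℤ) - 1)) = ⊥ ∧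
    Subgroup.closure (Set.range (CsigmaPerm hd r)) =
      Subgroup.closure {CsigmaPerm hd r ((0 : ZMod n₁), (1 : ZMod n₂)) *
        (CsigmaPerm hd r ((0 : ZMod n₁), (0 : ZMod n₂))) ^ (-(r : ℤ) - 1),
        CsigmaPerm hd r ((0 : ZMod n₁), (0 : ZMod n₂))} ∧
    Nonempty (↥(Subgroup.closure (Set.range (CsigmaPerm hd r))) ≃*
      Multiplicative (ZMod n₁ × ZMod n₂)) := by
  haveI : NeZero n₁ := ⟨h1.ne'⟩
  haveI : NeZero n₂ := ⟨h2.ne'⟩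
  set A := ZMod n₁ × ZMod n₂
  -- the three key permutations as translations
  have hσ : CsigmaPerm hd r ((0 : ZMod n₁), (0 : ZMod n₂)) =
      tHom A (Multiplicative.ofAdd ((0 : ZMod n₁), (1 : ZMod n₂))) := by
    simp [CsigmaPerm, tHom]
  have hσ01 : CsigmaPerm hd r ((0 : ZMod n₁), (1 : ZMod n₂)) =
      tHom A (Multiplicative.ofAdd ((1 : ZMod n₁), (r + 1 : ZMod n₂))) := by
    simp [CsigmaPerm, tHom, ZMod.cast_one hd]
  have hμ : CsigmaPerm hd r ((0 : ZMod n₁), (1 : ZMod n₂)) *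
      (CsigmaPerm hd r ((0 : ZMod n₁), (0 : ZMod n₂))) ^ (-(r : ℤ) - 1) =
      tHom A (Multiplicative.ofAdd ((1 : ZMod n₁), (0 : ZMod n₂))) := by
    have key : ((1 : ZMod n₁), (r + 1 : ZMod n₂)) +
        (-(r : ℤ) - 1) • ((0 : ZMod n₁), (1 : ZMod n₂)) =
        ((1 : ZMod n₁), (0 : ZMod n₂)) := by
      rw [Prod.smul_mk, Prod.mk_add_mk, Prod.mk.injEq]
      constructor
      · rw [smul_zero, add_zero]
      · rw [zsmul_eq_mul, mul_one]
        push_cast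
        ring
    rw [hσ, hσ01, ← map_zpow, ← map_mul, ← ofAdd_zsmul, ← ofAdd_add, key]
  have hmem : ∀ x : A, CsigmaPerm hd r x ∈ (tHom A).range := fun x =>
    ⟨Multiplicative.ofAdd (ZMod.castHom hd (ZMod n₁) x.2 - x.1 * (r : ZMod n₁),
      x.2 * (r : ZMod n₂) - (x.1.val : ZMod n₂) * (r : ZMod n₂) ^ 2 + 1), rfl⟩
  -- everything in the range of tHom is generated by μ and σ
  have key : ∀ p : A, p = p.1.val • ((1 : ZMod n₁), (0 : ZMod n₂)) +
      p.2.val • ((0 : ZMod n₁), (1 : ZMod n₂)) := by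
    rintro ⟨a, b⟩
    rw [Prod.smul_mk, Prod.smul_mk, Prod.mk_add_mk, Prod.mk.injEq]
    constructor
    · simp [nsmul_eq_mul, ZMod.natCast_val, ZMod.cast_id]
    · simp [nsmul_eq_mul, ZMod.natCast_val, ZMod.cast_id]
  have hgen : ∀ g : Multiplicative A,
      tHom A g =
        (tHom A (Multiplicative.ofAdd ((1 : ZMod n₁), (0 : ZMod n₂)))) ^ g.toAdd.1.val *
        (tHom A (Multiplicative.ofAdd ((0 : ZMod n₁), (1 : ZMod n₂)))) ^ g.toAdd.2.val := by
    intro g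
    conv_lhs => rw [← ofAdd_toAdd g, key g.toAdd]
    rw [ofAdd_add, map_mul, ofAdd_nsmul, ofAdd_nsmul, map_pow, map_pow]
  have hμmem : CsigmaPerm hd r ((0 : ZMod n₁), (1 : ZMod n₂)) *
      (CsigmaPerm hd r ((0 : ZMod n₁), (0 : ZMod n₂))) ^ (-(r : ℤ) - 1) ∈
      Subgroup.closure (Set.range (CsigmaPerm hd r)) :=
    mul_mem (Subgroup.subset_closure (Set.mem_range_self _))
      (zpow_mem (Subgroup.subset_closure (Set.mem_range_self _)) _)
  have hσmem : CsigmaPerm hd r ((0 : ZMod n₁), (0 : ZMod n₂)) ∈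
      Subgroup.closure (Set.range (CsigmaPerm hd r)) :=
    Subgroup.subset_closure (Set.mem_range_self _)
  have hrangeeq : Subgroup.closure (Set.range (CsigmaPerm hd r)) = (tHom A).range := by
    apply le_antisymm
    · rw [Subgroup.closure_le]
      rintro f ⟨x, rfl⟩
      exact hmem x
    · intro f hf
      obtain ⟨g, rfl⟩ := MonoidHom.mem_range.mp hf
      rw [hgen g, ← hμ, ← hσ]
      exact mul_mem (pow_mem hμmem _) (pow_mem hσmem _)
  have hclos : Subgroup.closure (Set.range (CsigmaPerm hd r)) =
      Subgroup.closure {CsigmaPerm hd r ((0 : ZMod n₁), (1 : ZMod n₂)) *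
        (CsigmaPerm hd r ((0 : ZMod n₁), (0 : ZMod n₂))) ^ (-(r : ℤ) - 1),
        CsigmaPerm hd r ((0 : ZMod n₁), (0 : ZMod n₂))} := by
    apply le_antisymm
    · rw [hrangeeq]
      intro f hf
      obtain ⟨g, rfl⟩ := MonoidHom.mem_range.mp hf
      rw [hgen g, ← hμ, ← hσ]
      have m1 : CsigmaPerm hd r ((0 : ZMod n₁), (1 : ZMod n₂)) *
          (CsigmaPerm hd r ((0 : ZMod n₁), (0 : ZMod n₂))) ^ (-(r : ℤ) - 1) ∈
          Subgroup.closure {CsigmaPerm hd r ((0 : ZMod n₁), (1 : ZMod n₂)) *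
            (CsigmaPerm hd r ((0 : ZMod n₁), (0 : ZMod n₂))) ^ (-(r : ℤ) - 1),
            CsigmaPerm hd r ((0 : ZMod n₁), (0 : ZMod n₂))} :=
        Subgroup.subset_closure (Set.mem_insert _ _)
      have m2 : CsigmaPerm hd r ((0 : ZMod n₁), (0 : ZMod n₂)) ∈
          Subgroup.closure {CsigmaPerm hd r ((0 : ZMod n₁), (1 : ZMod n₂)) *
            (CsigmaPerm hd r ((0 : ZMod n₁), (0 : ZMod n₂))) ^ (-(r : ℤ) - 1),
            CsigmaPerm hd r ((0 : ZMod n₁), (0 : ZMod n₂))} :=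
        Subgroup.subset_closure (Set.mem_insert_of_mem _ (Set.mem_singleton _))
      exact mul_mem (pow_mem m1 _) (pow_mem m2 _)
    · rw [Subgroup.closure_le]
      rintro f (rfl | rfl)
      · exact hμmem
      · exact hσmem
  refine ⟨?_, ?_, ?_, ?_, ?_, ?_, ?_⟩
  · intro x
    funext y
    simp only [CsigmaPerm, Csigma, Equiv.coe_addLeft]
    ext <;> simp <;> ring
  · intro a i
    rw [hμ]
    show ((1 : ZMod n₁), (0 : ZMod n₂)) + (a, i) = (a + 1, i)
    ext <;> simp [add_comm]
  · rw [hσ, orderOf_injective _ (tHom_inj A), orderOf_ofAdd_eq_addOrderOf,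
      Prod.addOrderOf]
    simp [ZMod.addOrderOf_one]
  · rw [hμ, orderOf_injective _ (tHom_inj A), orderOf_ofAdd_eq_addOrderOf,
      Prod.addOrderOf]
    simp [ZMod.addOrderOf_one]
  · rw [hμ, hσ, ← MonoidHom.map_zpowers, ← MonoidHom.map_zpowers,
      ← Subgroup.map_inf _ _ _ (tHom_inj A)]
    convert Subgroup.map_bot (tHom A)
    rw [Subgroup.eq_bot_iff_forall]
    intro x hx
    obtain ⟨hx1, hx2⟩ := Subgroup.mem_inf.mp hx
    obtain ⟨k, hk⟩ := Subgroup.mem_zpowers_iff.mp hx1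
    obtain ⟨j, hj⟩ := Subgroup.mem_zpowers_iff.mp hx2
    rw [← hk] at hj ⊢
    rw [← ofAdd_zsmul, ← ofAdd_zsmul] at hj
    have h' := Multiplicative.ofAdd.injective hj
    have h2' : k • (1 : ZMod n₂) = 0 := by
      have hs := congrArg Prod.snd h'
      rw [Prod.smul_snd, Prod.smul_snd, smul_zero] at hs
      exact hs.symm
    rw [← ofAdd_zsmul]
    have hz : k • ((0 : ZMod n₁), (1 : ZMod n₂)) = ((0 : ZMod n₁), (0 : ZMod n₂)) := by
      rw [Prod.smul_mk, h2', smul_zero]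
    rw [hz]
    rfl
  · rw [hclos]
  · exact ⟨(MulEquiv.subgroupCongr hrangeeq).trans
      (MonoidHom.ofInjective (tHom_inj A)).symm⟩
end

section
/- For every (a,i) ∈ ℤ/n₁ × ℤ/n₂, σ_{σ_{(a,i)}((a,i))}^{n₁} = σ_{(a,i)}^{(r+1)n₁}. -/
lemma Csigma_eq_add {n₁ n₂ : ℕ} (hd : n₁ ∣ n₂) (r : ℕ) (z : ZMod n₁ × ZMod n₂) :
    Csigma hd r z = (· + (ZMod.castHom hd (ZMod n₁) z.2 - z.1 * (r : ZMod n₁),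
      z.2 * (r : ZMod n₂) - (z.1.val : ZMod n₂) * (r : ZMod n₂) ^ 2 + 1)) := by
  funext y
  ext
  · simp only [Csigma, Prod.fst_add]; ring
  · simp only [Csigma, Prod.snd_add]; ring

/-- `σ_{σ_{(a,i)}((a,i))}^{n₁} = σ_{(a,i)}^{(r+1)n₁}`. -/
theorem Csigma_key_identity (n₁ n₂ r : ℕ) (h1 : 0 < n₁) (h2 : 0 < n₂) (hd : n₁ ∣ n₂)
    (hr : r < n₂ / n₁) (hr2 : n₂ ∣ n₁ * r ^ 2) (x : ZMod n₁ × ZMod n₂) :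
    (Csigma hd r (Csigma hd r x x))^[n₁] = (Csigma hd r x)^[(r + 1) * n₁] := by
  have hzero : (n₁ : ZMod n₂) * (r : ZMod n₂) ^ 2 = 0 := by
    have := (ZMod.natCast_eq_zero_iff (n₁ * r ^ 2) n₂).mpr hr2
    push_cast at this
    linear_combination this
  set z := Csigma hd r x x with hz
  have hz2 : z.2 = x.2 + x.2 * (r : ZMod n₂) - (x.1.val : ZMod n₂) * (r : ZMod n₂) ^ 2 + 1 := rfl
  rw [Csigma_eq_add hd r z, Csigma_eq_add hd r x, add_right_iterate, add_right_iterate]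
  funext y
  congr 1
  ext
  · simp only [Prod.smul_fst, smul_eq_mul, nsmul_eq_mul]
    push_cast
    simp [ZMod.natCast_self]
  · simp only [Prod.smul_snd, nsmul_eq_mul, Prod.snd_mul, Prod.snd_natCast, hz2]
    push_cast
    linear_combination ((x.1.val : ZMod n₂) - ((z.1.val : ℕ) : ZMod n₂)) * hzero
end

section
/- Two solutions C(n₁,n₂,r) and C(m₁,m₂,s) are isomorphic (as cycle sets, i.e. there is a bijection φ with φ∘σ_x = σ'_{φ(x)}∘φ for all x) if and only if n₁ = m₁, n₂ = m₂ and r = s. -/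
section Translations

variable {G H : Type*} [AddGroup G] [AddGroup H]

theorem map_add_eq_of_closure_eq_top (f : G → H) {s : Set G} (hs : AddSubgroup.closure s = ⊤)
    (hf : ∀ x ∈ s, ∃ h, ∀ y, f (y + x) = f y + h) (g y : G) :
    f (y + g) = f y + (-f 0 + f g) := by
  obtain ⟨h, hh⟩ : ∃ h, ∀ y, f (y + g) = f y + h := by
    induction (hs ▸ AddSubgroup.mem_top g : g ∈ AddSubgroup.closure s) using
      AddSubgroup.closure_induction with
    | mem x hx => exact hf x hx
    | zero => exact ⟨0, by simp⟩
    | add x x' _ _ hx hx' =>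
      obtain ⟨h, hh⟩ := hx
      obtain ⟨h', hh'⟩ := hx'
      exact ⟨h + h', fun y => by rw [← add_assoc, hh', hh, add_assoc]⟩
    | neg x _ hx =>
      obtain ⟨h, hh⟩ := hx
      exact ⟨-h, fun y => eq_add_neg_of_add_eq (by simpa using (hh (y + -x)).symm)⟩
  have h0 := hh 0
  rw [zero_add] at h0
  rw [hh, h0, neg_add_cancel_left]

def addEquivOfMapAdd (φ : G ≃ H) (hφ : ∀ g y, φ (y + g) = φ y + (-φ 0 + φ g)) : G ≃+ H :=
  { φ.trans (Equiv.addLeft (-φ 0)) with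
    map_add' := fun x y => by simp [hφ y x, add_assoc] }

theorem addEquivOfMapAdd_apply (φ : G ≃ H) (hφ : ∀ g y, φ (y + g) = φ y + (-φ 0 + φ g))
    (g : G) : addEquivOfMapAdd φ hφ g = -φ 0 + φ g :=
  rfl

end Translations

theorem ZMod.prod_eq_val_nsmul_add {n₁ n₂ : ℕ} [NeZero n₁] [NeZero n₂] (g : ZMod n₁ × ZMod n₂) :
    g = g.1.val • ((1, 0) : ZMod n₁ × ZMod n₂) + g.2.val • (0, 1) := by
  ext <;> simp

theorem ZMod.eq_of_prod_addEquiv_prod {n₁ n₂ m₁ m₂ : ℕ} (hdn : n₁ ∣ n₂) (hdm : m₁ ∣ m₂)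
    (hn₂ : n₂ ≠ 0) (e : ZMod n₁ × ZMod n₂ ≃+ ZMod m₁ × ZMod m₂) : n₁ = m₁ ∧ n₂ = m₂ := by
  have hexp := AddMonoid.exponent_eq_of_addEquiv e
  simp only [AddMonoid.exponent_prod, ZMod.exponent, lcm_eq_nat_lcm,
    Nat.lcm_eq_right_iff_dvd.mpr hdn, Nat.lcm_eq_right_iff_dvd.mpr hdm] at hexp
  have hcard := Nat.card_congr e.toEquiv
  simp only [Nat.card_prod, Nat.card_zmod, hexp] at hcard
  exact ⟨Nat.eq_of_mul_eq_mul_right (Nat.pos_of_ne_zero (hexp ▸ hn₂)) hcard, hexp⟩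

section Csigma

variable {n₁ n₂ : ℕ} (hd : n₁ ∣ n₂)

theorem Csigma_eq_add_s9 (r : ℕ) (x y : ZMod n₁ × ZMod n₂) :
    Csigma hd r x y = y + Csigma hd r x 0 := by
  ext <;> simp only [Csigma, Prod.fst_add, Prod.snd_add, Prod.fst_zero, Prod.snd_zero] <;> ring

theorem Csigma_zero_zero (r : ℕ) : Csigma hd r 0 0 = (0, 1) := by
  simp [Csigma]

theorem Csigma_zero_one_zero [NeZero n₁] (r : ℕ) :
    Csigma hd r (0, 1) 0 = (1, (r : ZMod n₂) + 1) := by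
  simp [Csigma, ZMod.cast_one hd]

theorem closure_range_Csigma_eq_top [NeZero n₁] [NeZero n₂] (r : ℕ) :
    AddSubgroup.closure (Set.range fun x => Csigma hd r x 0) = ⊤ := by
  set S := AddSubgroup.closure (Set.range fun x => Csigma hd r x 0)
  have h01 : ((0, 1) : ZMod n₁ × ZMod n₂) ∈ S :=
    AddSubgroup.subset_closure ⟨0, Csigma_zero_zero hd r⟩
  have h10 : ((1, 0) : ZMod n₁ × ZMod n₂) ∈ S := by
    have h1r : ((1, (r + 1 : ZMod n₂)) : ZMod n₁ × ZMod n₂) ∈ S :=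
      AddSubgroup.subset_closure ⟨(0, 1), Csigma_zero_one_zero hd r⟩
    have : ((1, 0) : ZMod n₁ × ZMod n₂) = (1, (r + 1 : ZMod n₂)) - (r + 1) • (0, 1) := by
      ext <;> simp
    rw [this]
    exact S.sub_mem h1r (nsmul_mem h01 _)
  refine AddSubgroup.eq_top_iff' _ |>.mpr fun g => ?_
  rw [ZMod.prod_eq_val_nsmul_add g]
  exact add_mem (nsmul_mem h10 _) (nsmul_mem h01 _)

end Csigma

section ReduceSnd

variable {n₁ n₂ k : ℕ} (hk : n₂ = n₁ * k)

def reduceSnd : ZMod n₁ × ZMod n₂ →+ ZMod k :=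
  (ZMod.castHom (Dvd.intro_left n₁ hk.symm) (ZMod k)).toAddMonoidHom.comp (AddMonoidHom.snd _ _)

theorem reduceSnd_apply (g : ZMod n₁ × ZMod n₂) :
    reduceSnd hk g = ZMod.castHom (Dvd.intro_left n₁ hk.symm) (ZMod k) g.2 :=
  rfl

theorem reduceSnd_apply_of_neZero [NeZero n₂] (g : ZMod n₁ × ZMod n₂) :
    reduceSnd hk g = (g.2.val : ZMod k) := by
  rw [reduceSnd_apply, ZMod.castHom_apply, ZMod.cast_eq_val]

theorem reduceSnd_eq_zero_of_nsmul_eq_zero [NeZero n₁] [NeZero n₂] {g : ZMod n₁ × ZMod n₂}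
    (hg : n₁ • g = 0) : reduceSnd hk g = 0 := by
  have h : ((n₁ * g.2.val : ℕ) : ZMod n₂) = 0 := by
    simpa using congrArg Prod.snd hg
  rw [ZMod.natCast_eq_zero_iff] at h
  rw [reduceSnd_apply_of_neZero, ZMod.natCast_eq_zero_iff]
  exact Nat.dvd_of_mul_dvd_mul_left (NeZero.pos n₁) (hk ▸ h)

theorem reduceSnd_Csigma_zero (hd : n₁ ∣ n₂) {s : ℕ} (hs : k ∣ s ^ 2) (w : ZMod n₁ × ZMod n₂) :
    reduceSnd hk (Csigma hd s w 0) = reduceSnd hk w * s + 1 := by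
  have hs0 : (s : ZMod k) ^ 2 = 0 := by exact_mod_cast (ZMod.natCast_eq_zero_iff _ _).mpr hs
  simp only [reduceSnd_apply, Csigma, Prod.snd_zero, zero_add, map_add, map_sub, map_mul, map_pow,
    map_natCast, map_one, hs0]
  ring

end ReduceSnd

section Rigidity

variable {n₁ n₂ k : ℕ} [NeZero n₁] [NeZero n₂]

theorem reduceSnd_map (hk : n₂ = n₁ * k) {F : Type*}
    [FunLike F (ZMod n₁ × ZMod n₂) (ZMod n₁ × ZMod n₂)]
    [AddMonoidHomClass F (ZMod n₁ × ZMod n₂) (ZMod n₁ × ZMod n₂)] (f : F) (g : ZMod n₁ × ZMod n₂) :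
    reduceSnd hk (f g) = reduceSnd hk g * reduceSnd hk (f (0, 1)) := by
  have h₁₀ : reduceSnd hk (f (1, 0)) = 0 := by
    refine reduceSnd_eq_zero_of_nsmul_eq_zero hk ?_
    rw [← map_nsmul]
    convert map_zero f
    ext <;> simp
  conv_lhs => rw [ZMod.prod_eq_val_nsmul_add g]
  rw [map_add, map_nsmul, map_nsmul, map_add, map_nsmul, map_nsmul, h₁₀, smul_zero, zero_add,
    nsmul_eq_mul, reduceSnd_apply_of_neZero hk g]

theorem eq_of_addEquiv_Csigma (hk : n₂ = n₁ * k) (hd : n₁ ∣ n₂) {r s : ℕ} (hr : r < k)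
    (hs : s < k) (hs₂ : k ∣ s ^ 2) (ψ : ZMod n₁ × ZMod n₂ ≃+ ZMod n₁ × ZMod n₂)
    (u : ZMod n₁ × ZMod n₂) (hψ : ∀ x, ψ (Csigma hd r x 0) = Csigma hd s (u + ψ x) 0) : r = s := by
  set δ := reduceSnd hk (ψ (0, 1))
  have h₀ : δ = reduceSnd hk u * s + 1 := by
    have := congrArg (reduceSnd hk) (hψ 0)
    rwa [Csigma_zero_zero, map_zero, add_zero, reduceSnd_Csigma_zero hk hd hs₂] at this
  have h₁ : (r + 1) * δ = (reduceSnd hk u + δ) * s + 1 := by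
    have := congrArg (reduceSnd hk) (hψ (0, 1))
    rwa [Csigma_zero_one_zero, reduceSnd_map hk ψ, reduceSnd_Csigma_zero hk hd hs₂, map_add,
      reduceSnd_apply, map_add, map_natCast, map_one] at this
  obtain ⟨g, hg⟩ := ψ.surjective (0, 1)
  have hδ : reduceSnd hk g * δ = 1 := by
    rw [← reduceSnd_map hk ψ, hg, reduceSnd_apply, map_one]
  have hrs : (r : ZMod k) = s := by
    linear_combination reduceSnd hk g * (h₁ - h₀) - (r - s) * hδ
  simpa [ZMod.natCast_eq_natCast_iff', Nat.mod_eq_of_lt hr, Nat.mod_eq_of_lt hs] using hrs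

end Rigidity

theorem Csigma_iso_iff_general (n₁ n₂ m₁ m₂ r s : ℕ)
    (hdn : n₁ ∣ n₂) (hdm : m₁ ∣ m₂) (hrn : r < n₂ / n₁) (hsm : s < m₂ / m₁)
    (hs2 : m₂ ∣ m₁ * s ^ 2) :
    (∃ φ : (ZMod n₁ × ZMod n₂) ≃ (ZMod m₁ × ZMod m₂),
      ∀ x y, φ (Csigma hdn r x y) = Csigma hdm s (φ x) (φ y)) ↔
      (n₁ = m₁ ∧ n₂ = m₂ ∧ r = s) := by
  refine ⟨fun ⟨φ, hφ⟩ => ?_, ?_⟩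
  · have hk : 0 < n₂ / n₁ := r.zero_le.trans_lt hrn
    have : NeZero n₁ := ⟨fun h => by simp [h] at hk⟩
    have : NeZero n₂ := ⟨fun h => by simp [h] at hk⟩
    have hφ' (x y) : φ (y + Csigma hdn r x 0) = φ y + Csigma hdm s (φ x) 0 := by
      rw [← Csigma_eq_add_s9, ← Csigma_eq_add_s9, hφ]
    have htrans := map_add_eq_of_closure_eq_top φ (closure_range_Csigma_eq_top hdn r)
      (by rintro _ ⟨x, rfl⟩; exact ⟨_, hφ' x⟩)
    obtain ⟨rfl, rfl⟩ := ZMod.eq_of_prod_addEquiv_prod hdn hdm (NeZero.ne n₂)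
      (addEquivOfMapAdd φ htrans)
    have hn₂ : n₂ = n₁ * (n₂ / n₁) := (Nat.mul_div_cancel' hdn).symm
    refine ⟨rfl, rfl, eq_of_addEquiv_Csigma hn₂ hdn hrn hsm ?_ (addEquivOfMapAdd φ htrans) (φ 0)
      fun x => ?_⟩
    · exact Nat.dvd_of_mul_dvd_mul_left (NeZero.pos n₁) (hn₂ ▸ hs2)
    · have := hφ' x 0
      rw [zero_add] at this
      rw [addEquivOfMapAdd_apply, addEquivOfMapAdd_apply, add_neg_cancel_left, this,
        neg_add_cancel_left]
  · rintro ⟨rfl, rfl, rfl⟩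
    exact ⟨Equiv.refl _, fun _ _ => rfl⟩

/-- `C(n₁,n₂,r) ≅ C(m₁,m₂,s)` iff `n₁ = m₁`, `n₂ = m₂` and `r = s`. -/
theorem Csigma_iso_iff (n₁ n₂ m₁ m₂ r s : ℕ)
    (hn1 : 0 < n₁) (hn2 : 0 < n₂) (hm1 : 0 < m₁) (hm2 : 0 < m₂)
    (hdn : n₁ ∣ n₂) (hdm : m₁ ∣ m₂) (hrn : r < n₂ / n₁) (hsm : s < m₂ / m₁)
    (hr2 : n₂ ∣ n₁ * r ^ 2) (hs2 : m₂ ∣ m₁ * s ^ 2) :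
    (∃ φ : (ZMod n₁ × ZMod n₂) ≃ (ZMod m₁ × ZMod m₂),
      ∀ x y, φ (Csigma hdn r x y) = Csigma hdm s (φ x) (φ y)) ↔
      (n₁ = m₁ ∧ n₂ = m₂ ∧ r = s) :=
  Csigma_iso_iff_general n₁ n₂ m₁ m₂ r s hdn hdm hrn hsm hs2
end

section
/- Let (X,σ) be an indecomposable solution of multipermutational level at most 2 whose permutation group G(X) = ⟨σ_x : x ∈ X⟩ is abelian. Then G(X) is generated by at most two elements; in fact, for any e ∈ X, G(X) = ⟨σ_e, σ_{σ_e(e)}σ_e^{-1}⟩. -/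
/-!
With `G(X)` abelian, level two makes `σ_{σ_x⁻¹(y)}` independent of `x`, and the cycle condition at
`(x, σ_x(y))` then reads `σ_x σ_y = σ_{σ_x(y)} σ_{σ_x⁻¹(x)}`. Hence the displacement
`σ_{σ_z(y)} σ_y⁻¹` depends neither on `y` nor (level two again) on `z`: it is the single element
`c = σ_{σ_e(e)} σ_e⁻¹`. So `{x | σ_x ∈ ⟨σ_e, c⟩}` is stable under every `σ_z`, hence under `G(X)`,
and by transitivity it is all of `X`.
-/

open Subgroup

theorem MulAction.smul_mem_of_mem_closure {G α : Type*} [Group G] [MulAction G α] {s : Set G}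
    {S : Set α} (hs : ∀ g ∈ s, ∀ x, g • x ∈ S ↔ x ∈ S) {g : G} (hg : g ∈ closure s) {x : α}
    (hx : x ∈ S) : g • x ∈ S :=
  (mem_stabilizer_set.1 ((closure_le _).2 (fun g hg ↦ mem_stabilizer_set.2 (hs g hg)) hg) x).2 hx

section CycleSet

variable {X : Type*} {σ : X → Equiv.Perm X}

theorem sigma_inv_apply_eq (hmp2 : ∀ x y z : X, σ (σ y x) = σ (σ z x))
    (hab : ∀ x y : X, Commute (σ x) (σ y)) (x z y : X) :
    σ ((σ x)⁻¹ y) = σ ((σ z)⁻¹ y) := by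
  calc σ ((σ x)⁻¹ y) = σ (σ z ((σ x * σ z)⁻¹ y)) := by
        rw [← Equiv.Perm.mul_apply, mul_inv_rev, mul_inv_cancel_left]
    _ = σ (σ x ((σ x * σ z)⁻¹ y)) := hmp2 _ z x
    _ = σ ((σ z)⁻¹ y) := by
      rw [← Equiv.Perm.mul_apply, mul_inv_rev, ← mul_assoc, (hab x z).inv_right.mul_inv_cancel]

theorem sigma_mul_sigma
    (hcc : ∀ x y : X, (σ ((σ x)⁻¹ y))⁻¹ * (σ x)⁻¹ = (σ ((σ y)⁻¹ x))⁻¹ * (σ y)⁻¹)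
    (hmp2 : ∀ x y z : X, σ (σ y x) = σ (σ z x))
    (hab : ∀ x y : X, Commute (σ x) (σ y))
    (x y : X) : σ x * σ y = σ (σ x y) * σ ((σ x)⁻¹ x) := by
  have h := hcc x (σ x y)
  rw [← Equiv.Perm.mul_apply, inv_mul_cancel, Equiv.Perm.one_apply,
    sigma_inv_apply_eq hmp2 hab (σ x y) x] at h
  rw [← inv_inj, mul_inv_rev, h, mul_inv_rev]

theorem sigma_sigma_apply_mul_inv
    (hcc : ∀ x y : X, (σ ((σ x)⁻¹ y))⁻¹ * (σ x)⁻¹ = (σ ((σ y)⁻¹ x))⁻¹ * (σ y)⁻¹)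
    (hmp2 : ∀ x y z : X, σ (σ y x) = σ (σ z x))
    (hab : ∀ x y : X, Commute (σ x) (σ y))
    (x y : X) : σ (σ x y) * (σ y)⁻¹ = σ x * (σ ((σ x)⁻¹ x))⁻¹ := by
  rw [eq_mul_inv_of_mul_eq (sigma_mul_sigma hcc hmp2 hab x y).symm]
  simp only [mul_assoc]
  rw [(hab y _).inv_right.mul_inv_cancel_assoc]

theorem sigma_sigma_apply_mul_inv_eq
    (hcc : ∀ x y : X, (σ ((σ x)⁻¹ y))⁻¹ * (σ x)⁻¹ = (σ ((σ y)⁻¹ x))⁻¹ * (σ y)⁻¹)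
    (hmp2 : ∀ x y z : X, σ (σ y x) = σ (σ z x))
    (hab : ∀ x y : X, Commute (σ x) (σ y))
    (z y z' y' : X) : σ (σ z y) * (σ y)⁻¹ = σ (σ z' y') * (σ y')⁻¹ := by
  rw [hmp2 y z z', sigma_sigma_apply_mul_inv hcc hmp2 hab, sigma_sigma_apply_mul_inv hcc hmp2 hab]

end CycleSet

theorem perm_group_two_generated_general {X : Type*} (σ : X → Equiv.Perm X)
    (hcc : ∀ x y : X, (σ ((σ x)⁻¹ y))⁻¹ * (σ x)⁻¹ = (σ ((σ y)⁻¹ x))⁻¹ * (σ y)⁻¹)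
    (hmp2 : ∀ x y z : X, σ (σ y x) = σ (σ z x))
    (hab : ∀ x y : X, Commute (σ x) (σ y))
    (htr : ∀ x y : X, ∃ g ∈ Subgroup.closure (Set.range σ), g x = y) :
    ∀ e : X, Subgroup.closure (Set.range σ) =
      Subgroup.closure {σ e, σ (σ e e) * (σ e)⁻¹} := by
  intro e
  set c := σ (σ e e) * (σ e)⁻¹
  have hc (z y : X) : σ (σ z y) = c * σ y :=
    eq_mul_of_mul_inv_eq (sigma_sigma_apply_mul_inv_eq hcc hmp2 hab z y e e)
  set H := closure {σ e, c}
  have hcH : c ∈ H := subset_closure (by simp)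
  have hstable {g : Equiv.Perm X} (hg : g ∈ closure (Set.range σ)) {x : X} (hx : σ x ∈ H) :
      σ (g x) ∈ H :=
    MulAction.smul_mem_of_mem_closure (S := {x | σ x ∈ H})
      (by rintro _ ⟨z, rfl⟩ y; simp [hc, mul_mem_cancel_left hcH]) hg hx
  refine le_antisymm ((closure_le _).2 ?_) ((closure_le _).2 ?_)
  · rintro _ ⟨a, rfl⟩
    obtain ⟨g, hg, rfl⟩ := htr e a
    exact hstable hg (subset_closure (by simp))
  · rintro _ (rfl | rfl)
    · exact subset_closure ⟨e, rfl⟩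
    · exact mul_mem (subset_closure ⟨_, rfl⟩) (inv_mem (subset_closure ⟨e, rfl⟩))

/-- for an indecomposable solution of multipermutational level at most 2
with abelian permutation group, `G(X)` is generated by `σ_e` and `σ_{σ_e(e)}σ_e⁻¹`,
for any `e ∈ X`; in particular it is generated by at most two elements. -/
theorem perm_group_two_generated {X : Type*} (σ : X → Equiv.Perm X)
    (hcc : ∀ x y : X, (σ ((σ x)⁻¹ y))⁻¹ * (σ x)⁻¹ = (σ ((σ y)⁻¹ x))⁻¹ * (σ y)⁻¹)
    (hnd : Function.Bijective fun a : X => (σ a)⁻¹ a)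
    (hmp2 : ∀ x y z : X, σ (σ y x) = σ (σ z x))
    (hab : ∀ x y : X, Commute (σ x) (σ y))
    (htr : ∀ x y : X, ∃ g ∈ Subgroup.closure (Set.range σ), g x = y) :
    ∀ e : X, Subgroup.closure (Set.range σ) =
      Subgroup.closure {σ e, σ (σ e e) * (σ e)⁻¹} :=
  perm_group_two_generated_general σ hcc hmp2 hab htr
end

section
/- Let (X,σ) be an indecomposable solution of multipermutational level at most 2 with abelian permutation group. Then all permutations σ_x, x ∈ X, have the same order. -/
/-!
Specialising the cycle-set identity to `y = σ_a (σ_b⁻¹ b)`, whose `σ` is `σ_b` by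
multipermutational level 2, gives `σ_a σ_{σ_b⁻¹ b} = σ_b σ_{σ_b⁻¹ a}`, i.e.
`σ_{σ_b a} = σ_b σ_a σ_{σ_b⁻¹ b}⁻¹`. Since the permutation group is abelian and
`σ_{σ_b a}` does not depend on `b`, there is one permutation `d`, commuting with
every `σ_w`, such that `σ_{σ_z w} = σ_w d` for all `z, w`. Hence `σ_{g w} ∈ σ_w ⟨d⟩`
for every `g` in the permutation group, and `σ_w = σ_{σ_w ^ n w} = σ_w d ^ n` for `n`
the order of `σ_w`, so `d ^ n = 1`. By transitivity any two `σ_x, σ_y` differ by a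
power of `d`, which commutes with both and is killed by both orders, so each order
divides the other.
-/

theorem orderOf_mul_zpow_dvd {G : Type*} [Group G] {b d : G} (hc : Commute b d)
    (hd : d ^ orderOf b = 1) (k : ℤ) : orderOf (b * d ^ k) ∣ orderOf b := by
  apply orderOf_dvd_of_pow_eq_one
  rw [(hc.zpow_right k).mul_pow, pow_orderOf_eq_one, one_mul, ← zpow_natCast, ← zpow_mul,
    mul_comm, zpow_mul, zpow_natCast, hd, one_zpow]

theorem orderOf_mul_zpow_eq {G : Type*} [Group G] {b d : G} (hc : Commute b d)
    (hb : d ^ orderOf b = 1) {k : ℤ} (hbk : d ^ orderOf (b * d ^ k) = 1) :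
    orderOf (b * d ^ k) = orderOf b := by
  refine (orderOf_mul_zpow_dvd hc hb k).antisymm ?_
  simpa [mul_assoc, ← zpow_add] using
    orderOf_mul_zpow_dvd (hc.mul_left ((Commute.refl d).zpow_left k)) hbk (-k)

section CycleSet

variable {X : Type*} {σ : X → Equiv.Perm X}

theorem sigma_mul_sigma_inv_apply_self
    (hcc : ∀ x y : X, (σ ((σ x)⁻¹ y))⁻¹ * (σ x)⁻¹ = (σ ((σ y)⁻¹ x))⁻¹ * (σ y)⁻¹)
    (hmp2 : ∀ x y z : X, σ (σ y x) = σ (σ z x)) (a b : X) :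
    σ a * σ ((σ b)⁻¹ b) = σ b * σ ((σ b)⁻¹ a) := by
  have hy : σ (σ a ((σ b)⁻¹ b)) = σ b := by
    rw [hmp2 _ a b, Equiv.Perm.eq_inv_iff_eq.mp rfl]
  have h := congrArg Inv.inv (hcc a (σ a ((σ b)⁻¹ b)))
  rwa [Equiv.Perm.inv_eq_iff_eq.mpr rfl, hy, mul_inv_rev, mul_inv_rev, inv_inv, inv_inv, inv_inv,
    inv_inv] at h

theorem sigma_apply_mul_sigma_inv_apply_self
    (hcc : ∀ x y : X, (σ ((σ x)⁻¹ y))⁻¹ * (σ x)⁻¹ = (σ ((σ y)⁻¹ x))⁻¹ * (σ y)⁻¹)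
    (hmp2 : ∀ x y z : X, σ (σ y x) = σ (σ z x)) (a b : X) :
    σ (σ b a) * σ ((σ b)⁻¹ b) = σ b * σ a := by
  simpa using sigma_mul_sigma_inv_apply_self hcc hmp2 (σ b a) b

theorem exists_sigma_apply_eq_mul
    (hcc : ∀ x y : X, (σ ((σ x)⁻¹ y))⁻¹ * (σ x)⁻¹ = (σ ((σ y)⁻¹ x))⁻¹ * (σ y)⁻¹)
    (hmp2 : ∀ x y z : X, σ (σ y x) = σ (σ z x)) (hab : ∀ x y : X, Commute (σ x) (σ y))
    (x : X) : ∃ d : Equiv.Perm X, (∀ w, Commute (σ w) d) ∧ ∀ z w, σ (σ z w) = σ w * d := by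
  refine ⟨σ x * (σ ((σ x)⁻¹ x))⁻¹, fun w => (hab w x).mul_right (hab w _).inv_right,
    fun z w => ?_⟩
  rw [hmp2 w z x, eq_mul_inv_iff_mul_eq.mpr (sigma_apply_mul_sigma_inv_apply_self hcc hmp2 w x),
    (hab x w).eq, mul_assoc]

theorem sigma_pow_apply_eq_mul_pow {d f : Equiv.Perm X} (hf : ∀ w, σ (f w) = σ w * d) (n : ℕ)
    (w : X) : σ ((f ^ n) w) = σ w * d ^ n := by
  induction n generalizing w with
  | zero => simp
  | succ n ih => rw [pow_succ, Equiv.Perm.mul_apply, ih, hf, pow_succ', mul_assoc]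

theorem pow_orderOf_sigma_eq_one {d : Equiv.Perm X} (hd : ∀ z w, σ (σ z w) = σ w * d) (w : X) :
    d ^ orderOf (σ w) = 1 := by
  have h := sigma_pow_apply_eq_mul_pow (hd w) (orderOf (σ w)) w
  rw [pow_orderOf_eq_one, Equiv.Perm.one_apply] at h
  exact left_eq_mul.mp h

theorem exists_sigma_apply_eq_mul_zpow {d : Equiv.Perm X} (hd : ∀ z w, σ (σ z w) = σ w * d)
    {g : Equiv.Perm X} (hg : g ∈ Subgroup.closure (Set.range σ)) (w : X) :
    ∃ k : ℤ, σ (g w) = σ w * d ^ k := by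
  induction hg using Subgroup.closure_induction generalizing w with
  | mem g hg =>
    obtain ⟨z, rfl⟩ := hg
    exact ⟨1, by rw [zpow_one, hd]⟩
  | one => exact ⟨0, by simp⟩
  | mul g₁ g₂ _ _ ih₁ ih₂ =>
    obtain ⟨k₂, hk₂⟩ := ih₂ w
    obtain ⟨k₁, hk₁⟩ := ih₁ (g₂ w)
    exact ⟨k₂ + k₁, by rw [Equiv.Perm.mul_apply, hk₁, hk₂, zpow_add, mul_assoc]⟩
  | inv g _ ih =>
    obtain ⟨k, hk⟩ := ih (g⁻¹ w)
    rw [← Equiv.Perm.mul_apply, mul_inv_cancel, Equiv.Perm.one_apply] at hk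
    exact ⟨-k, by rw [hk, mul_assoc, ← zpow_add, add_neg_cancel, zpow_zero, mul_one]⟩

end CycleSet

theorem perm_same_order_general {X : Type*} (σ : X → Equiv.Perm X)
    (hcc : ∀ x y : X, (σ ((σ x)⁻¹ y))⁻¹ * (σ x)⁻¹ = (σ ((σ y)⁻¹ x))⁻¹ * (σ y)⁻¹)
    (hmp2 : ∀ x y z : X, σ (σ y x) = σ (σ z x))
    (hab : ∀ x y : X, Commute (σ x) (σ y))
    (htr : ∀ x y : X, ∃ g ∈ Subgroup.closure (Set.range σ), g x = y) :
    ∀ x y : X, orderOf (σ x) = orderOf (σ y) := by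
  intro x y
  obtain ⟨d, hcd, hd⟩ := exists_sigma_apply_eq_mul hcc hmp2 hab x
  obtain ⟨g, hg, rfl⟩ := htr x y
  obtain ⟨k, hk⟩ := exists_sigma_apply_eq_mul_zpow hd hg x
  have hord := pow_orderOf_sigma_eq_one hd
  rw [hk, orderOf_mul_zpow_eq (hcd x) (hord x) (hk ▸ hord (g x))]

/-- in an indecomposable solution of multipermutational level at most 2
with abelian permutation group, all permutations `σ_x` have the same order. -/
theorem perm_same_order {X : Type*} (σ : X → Equiv.Perm X)
    (hcc : ∀ x y : X, (σ ((σ x)⁻¹ y))⁻¹ * (σ x)⁻¹ = (σ ((σ y)⁻¹ x))⁻¹ * (σ y)⁻¹)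
    (hnd : Function.Bijective fun a : X => (σ a)⁻¹ a)
    (hmp2 : ∀ x y z : X, σ (σ y x) = σ (σ z x))
    (hab : ∀ x y : X, Commute (σ x) (σ y))
    (htr : ∀ x y : X, ∃ g ∈ Subgroup.closure (Set.range σ), g x = y) :
    ∀ x y : X, orderOf (σ x) = orderOf (σ y) :=
  perm_same_order_general σ hcc hmp2 hab htr
end

section
/- Let (X,σ) be an indecomposable solution of multipermutational level at most 2 with abelian permutation group. Then for each x ∈ X and i ∈ ℤ⁺, σ_{σ_x^i(x)} = σ_{σ_x(x)}^i · σ_x^{1-i} (equivalently, writing L_y = σ_y σ_x^{-1}, one has L_{σ_x^i(x)} = L_{σ_x(x)}^i). -/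
/-!
Write `τ b = σ (σ b b)`. Level two says `σ (σ a b) = τ b` for every `a`, and combining this with
the cycle-set identity and commutativity of the `σ`'s gives `τ v σ u = τ u σ v`, i.e.
`τ b σ_b⁻¹ = L` does not depend on `b`. Hence `σ_{σ_x^{i+1}(x)} = τ (σ_x^i x) = L σ_{σ_x^i(x)}`,
and induction gives `σ_{σ_x^i(x)} = L^i σ_x`.
-/

namespace CycleSet

variable {X : Type*} {σ : X → Equiv.Perm X}

theorem mul_sigma_inv_apply_comm
    (hcc : ∀ x y : X, (σ ((σ x)⁻¹ y))⁻¹ * (σ x)⁻¹ = (σ ((σ y)⁻¹ x))⁻¹ * (σ y)⁻¹) (a b : X) :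
    σ a * σ ((σ a)⁻¹ b) = σ b * σ ((σ b)⁻¹ a) := by
  simpa only [mul_inv_rev, inv_inv] using congrArg Inv.inv (hcc a b)

theorem sigma_sigma_inv_diag_apply
    (hcc : ∀ x y : X, (σ ((σ x)⁻¹ y))⁻¹ * (σ x)⁻¹ = (σ ((σ y)⁻¹ x))⁻¹ * (σ y)⁻¹)
    (hmp2 : ∀ x y z : X, σ (σ y x) = σ (σ z x)) (z a : X) :
    σ ((σ (σ z z))⁻¹ a) = (σ (σ z z))⁻¹ * (σ a * σ z) := by
  have h := mul_sigma_inv_apply_comm hcc a (σ a z)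
  rw [show (σ a)⁻¹ (σ a z) = z from (σ a).symm_apply_apply z, hmp2 z a z] at h
  rw [h, inv_mul_cancel_left]

theorem sigma_diag_inv_diag_apply
    (hcc : ∀ x y : X, (σ ((σ x)⁻¹ y))⁻¹ * (σ x)⁻¹ = (σ ((σ y)⁻¹ x))⁻¹ * (σ y)⁻¹)
    (hmp2 : ∀ x y z : X, σ (σ y x) = σ (σ z x)) (hab : ∀ x y : X, Commute (σ x) (σ y))
    (u a : X) :
    σ (σ ((σ (σ u u))⁻¹ a) ((σ (σ u u))⁻¹ a)) = (σ (σ u u))⁻¹ * (σ (σ a a) * σ u) := by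
  have hcomm : σ u ((σ (σ u u))⁻¹ a) = (σ (σ u u))⁻¹ (σ u a) :=
    DFunLike.congr_fun (hab u (σ u u)).inv_right.eq a
  calc σ (σ ((σ (σ u u))⁻¹ a) ((σ (σ u u))⁻¹ a))
      = σ (σ u ((σ (σ u u))⁻¹ a)) := hmp2 _ _ u
    _ = σ ((σ (σ u u))⁻¹ (σ u a)) := by rw [hcomm]
    _ = (σ (σ u u))⁻¹ * (σ (σ u a) * σ u) := sigma_sigma_inv_diag_apply hcc hmp2 u (σ u a)
    _ = (σ (σ u u))⁻¹ * (σ (σ a a) * σ u) := by rw [hmp2 a u a]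

theorem sigma_diag_mul_comm
    (hcc : ∀ x y : X, (σ ((σ x)⁻¹ y))⁻¹ * (σ x)⁻¹ = (σ ((σ y)⁻¹ x))⁻¹ * (σ y)⁻¹)
    (hmp2 : ∀ x y z : X, σ (σ y x) = σ (σ z x)) (hab : ∀ x y : X, Commute (σ x) (σ y))
    (u v : X) :
    σ (σ v v) * σ u = σ (σ u u) * σ v := by
  have hshift : ∀ u v : X,
      σ ((σ (σ u u))⁻¹ (σ v v)) = (σ (σ u u))⁻¹ * (σ (σ v v) * σ u) := by
    intro u v
    have hcomm : (σ (σ u u))⁻¹ (σ v v) = σ v ((σ (σ u u))⁻¹ v) :=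
      DFunLike.congr_fun (hab v (σ u u)).inv_right.eq.symm v
    rw [hcomm, hmp2 _ v _, sigma_diag_inv_diag_apply hcc hmp2 hab u v]
  have h := mul_sigma_inv_apply_comm hcc (σ u u) (σ v v)
  rwa [hshift u v, hshift v u, mul_inv_cancel_left, mul_inv_cancel_left] at h

theorem sigma_diag_eq_mul
    (hcc : ∀ x y : X, (σ ((σ x)⁻¹ y))⁻¹ * (σ x)⁻¹ = (σ ((σ y)⁻¹ x))⁻¹ * (σ y)⁻¹)
    (hmp2 : ∀ x y z : X, σ (σ y x) = σ (σ z x)) (hab : ∀ x y : X, Commute (σ x) (σ y))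
    (x b : X) :
    σ (σ b b) = σ (σ x x) * (σ x)⁻¹ * σ b := by
  rw [mul_assoc, ((hab b x).inv_right.eq).symm, ← mul_assoc,
    sigma_diag_mul_comm hcc hmp2 hab b x, mul_inv_cancel_right]

theorem sigma_pow_apply_self
    (hcc : ∀ x y : X, (σ ((σ x)⁻¹ y))⁻¹ * (σ x)⁻¹ = (σ ((σ y)⁻¹ x))⁻¹ * (σ y)⁻¹)
    (hmp2 : ∀ x y z : X, σ (σ y x) = σ (σ z x)) (hab : ∀ x y : X, Commute (σ x) (σ y))
    (x : X) (i : ℕ) :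
    σ ((σ x ^ i) x) = (σ (σ x x) * (σ x)⁻¹) ^ i * σ x := by
  induction i with
  | zero => rw [pow_zero, pow_zero, one_mul, Equiv.Perm.one_apply]
  | succ i ih =>
    rw [pow_succ', Equiv.Perm.mul_apply, hmp2 _ x _, sigma_diag_eq_mul hcc hmp2 hab x, ih,
      pow_succ']
    simp only [mul_assoc]

end CycleSet

theorem perm_power_formula_general {X : Type*} (σ : X → Equiv.Perm X)
    (hcc : ∀ x y : X, (σ ((σ x)⁻¹ y))⁻¹ * (σ x)⁻¹ = (σ ((σ y)⁻¹ x))⁻¹ * (σ y)⁻¹)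
    (hmp2 : ∀ x y z : X, σ (σ y x) = σ (σ z x))
    (hab : ∀ x y : X, Commute (σ x) (σ y)) :
    ∀ (x : X) (i : ℕ), 0 < i →
      σ ((σ x ^ i) x) = (σ (σ x x)) ^ i * (σ x) ^ ((1 : ℤ) - (i : ℤ)) ∧
      σ ((σ x ^ i) x) * (σ x)⁻¹ = (σ (σ x x) * (σ x)⁻¹) ^ i := by
  intro x i _
  have hpow := CycleSet.sigma_pow_apply_self hcc hmp2 hab x i
  refine ⟨?_, by rw [hpow, mul_inv_cancel_right]⟩
  rw [hpow, (hab (σ x x) x).inv_right.mul_pow, mul_assoc, zpow_sub, zpow_one, zpow_natCast,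
    inv_pow, ((Commute.refl (σ x)).pow_left i).inv_left.eq]

/-- in an indecomposable solution of multipermutational level at most 2
with abelian permutation group, `σ_{σ_x^i(x)} = σ_{σ_x(x)}^i σ_x^{1-i}`; equivalently,
writing `L_y = σ_y σ_x⁻¹`, one has `L_{σ_x^i(x)} = L_{σ_x(x)}^i`. -/
theorem perm_power_formula {X : Type*} (σ : X → Equiv.Perm X)
    (hcc : ∀ x y : X, (σ ((σ x)⁻¹ y))⁻¹ * (σ x)⁻¹ = (σ ((σ y)⁻¹ x))⁻¹ * (σ y)⁻¹)
    (hnd : Function.Bijective fun a : X => (σ a)⁻¹ a)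
    (hmp2 : ∀ x y z : X, σ (σ y x) = σ (σ z x))
    (hab : ∀ x y : X, Commute (σ x) (σ y))
    (htr : ∀ x y : X, ∃ g ∈ Subgroup.closure (Set.range σ), g x = y) :
    ∀ (x : X) (i : ℕ), 0 < i →
      σ ((σ x ^ i) x) = (σ (σ x x)) ^ i * (σ x) ^ ((1 : ℤ) - (i : ℤ)) ∧
      σ ((σ x ^ i) x) * (σ x)⁻¹ = (σ (σ x x) * (σ x)⁻¹) ^ i :=
  perm_power_formula_general σ hcc hmp2 hab
end

section
/- Let G be a finite abelian group with invariant factors (n₁, n₂) (i.e. G ≅ ℤ/n₁ × ℤ/n₂ with n₁ ∣ n₂). If a, b ∈ G and a has order n₂, then n₁·b lies in the cyclic subgroup generated by n₁·a. -/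
/-- if `G` is a finite abelian group with invariant factors `(n₁, n₂)`
(`n₁ ∣ n₂`) and `a, b ∈ G` with `a` of order `n₂`, then `n₁ • b ∈ ⟨n₁ • a⟩`. -/
theorem smul_mem_zmultiples {G : Type*} [AddCommGroup G] [Fintype G]
    (n₁ n₂ : ℕ) (h1 : 0 < n₁) (h2 : 0 < n₂) (hd : n₁ ∣ n₂)
    (hiso : Nonempty (G ≃+ (ZMod n₁ × ZMod n₂)))
    (a b : G) (ha : addOrderOf a = n₂) :
    n₁ • b ∈ AddSubgroup.zmultiples (n₁ • a) := by
  obtain ⟨e⟩ := hiso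
  haveI : NeZero n₁ := ⟨h1.ne'⟩
  haveI : NeZero n₂ := ⟨h2.ne'⟩
  obtain ⟨q, hq⟩ := hd
  have hq0 : 0 < q := by
    rcases Nat.eq_zero_or_pos q with h | h
    · simp [h] at hq; omega
    · exact h
  haveI : NeZero q := ⟨hq0.ne'⟩
  set x := (e a).1 with hxdef
  set y := (e a).2 with hydef
  have hea : e a = (x, y) := rfl
  clear_value x y
  set m := y.val with hmdef
  clear_value m
  have hy : (m : ZMod n₂) = y := by rw [hmdef, ZMod.natCast_val, ZMod.cast_id]
  have hlcm : Nat.lcm (addOrderOf x) (addOrderOf y) = n₂ := by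
    have h' := addOrderOf_injective e.toAddMonoidHom e.injective a
    rw [show e.toAddMonoidHom a = e a from rfl, hea, Prod.addOrderOf, ha] at h'
    exact h'
  have ho : addOrderOf y = n₂ / Nat.gcd n₂ m := by
    rw [← hy]; exact ZMod.addOrderOf_coe m h2.ne'
  have hx1 : n₁ • x = 0 := by
    rw [nsmul_eq_mul, ZMod.natCast_self, zero_mul]
  have hx : addOrderOf x ∣ n₁ := addOrderOf_dvd_of_nsmul_eq_zero hx1
  have hn2 : n₂ ∣ Nat.lcm n₁ (addOrderOf y) := by
    have := Nat.lcm_dvd (hx.trans (Nat.dvd_lcm_left n₁ (addOrderOf y)))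
      (Nat.dvd_lcm_right n₁ (addOrderOf y))
    rwa [hlcm] at this
  have hdivdvd : ∀ (u v n : ℕ), 0 < n → 0 < u → u ∣ v → v ∣ n → n / v ∣ n / u := by
    intro u v n hn hu0 huv hvn
    obtain ⟨c, rfl⟩ := huv
    obtain ⟨k, rfl⟩ := hvn
    have hc : 0 < c := by
      rcases Nat.eq_zero_or_pos c with h | h
      · subst h; simp at hn
      · exact h
    rw [Nat.mul_div_cancel_left k (by positivity), mul_assoc,
      Nat.mul_div_cancel_left (c * k) hu0]
    exact Dvd.intro_left c rfl
  have hcop : Nat.Coprime m q := by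
    set d := Nat.gcd m q with hddef
    have hdq : d ∣ q := Nat.gcd_dvd_right m q
    have hdn : d ∣ n₂ := hdq.trans ⟨n₁, by rw [hq, mul_comm]⟩
    have hd0 : 0 < d := Nat.gcd_pos_of_pos_right m hq0
    have hA : n₁ ∣ n₂ / d := ⟨q / d, by rw [hq, Nat.mul_div_assoc _ hdq]⟩
    have hB : addOrderOf y ∣ n₂ / d := by
      rw [ho]
      exact hdivdvd d (Nat.gcd n₂ m) n₂ h2 hd0
        (Nat.dvd_gcd hdn (Nat.gcd_dvd_left m q)) (Nat.gcd_dvd_left n₂ m)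
    have hnd : n₂ ∣ n₂ / d := hn2.trans (Nat.lcm_dvd hA hB)
    have heq : n₂ / d = n₂ := le_antisymm (Nat.div_le_self _ _)
      (Nat.le_of_dvd (Nat.div_pos (Nat.le_of_dvd h2 hdn) hd0) hnd)
    have hmul : n₂ * d = n₂ := by
      calc n₂ * d = n₂ / d * d := by rw [heq]
        _ = n₂ := Nat.div_mul_cancel hdn
    exact Nat.eq_of_mul_eq_mul_left h2 (by rw [hmul, mul_one])
  set k := ((m : ZMod q))⁻¹.val with hkdef
  clear_value k
  have hk : m * k ≡ 1 [MOD q] := by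
    have hu := ZMod.coe_mul_inv_eq_one m hcop
    have h2' : ((m * k : ℕ) : ZMod q) = ((1 : ℕ) : ZMod q) := by
      rw [Nat.cast_mul, Nat.cast_one, hkdef, ZMod.natCast_val, ZMod.cast_id]
      exact hu
    exact (ZMod.natCast_eq_natCast_iff _ _ _).mp h2'
  have hmod : n₁ * (m * k) ≡ n₁ * 1 [MOD n₁ * q] := hk.mul_left' n₁
  have hcast : ((n₁ * (m * k) : ℕ) : ZMod n₂) = (n₁ : ZMod n₂) := by
    have := (ZMod.natCast_eq_natCast_iff _ _ _).mpr hmod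
    rw [← hq] at this
    simpa using this
  set t := (e b).2.val with htdef
  clear_value t
  have htc : (t : ZMod n₂) = (e b).2 := by rw [htdef, ZMod.natCast_val, ZMod.cast_id]
  refine ⟨((t * k : ℕ) : ℤ), ?_⟩
  apply e.injective
  rw [map_zsmul, map_nsmul, map_nsmul, hea]
  apply Prod.ext
  · show ((t * k : ℕ) : ℤ) • (n₁ • x) = n₁ • (e b).1
    rw [hx1, smul_zero, nsmul_eq_mul, ZMod.natCast_self, zero_mul]
  · show ((t * k : ℕ) : ℤ) • (n₁ • y) = n₁ • (e b).2
    rw [natCast_zsmul, nsmul_eq_mul, nsmul_eq_mul, nsmul_eq_mul, ← hy, ← htc]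
    push_cast
    have step1 : (t : ZMod n₂) * (k : ZMod n₂) * ((n₁ : ZMod n₂) * (m : ZMod n₂))
        = (t : ZMod n₂) * (((n₁ * (m * k) : ℕ) : ZMod n₂)) := by push_cast; ring
    rw [step1, hcast]
    ring
end

section
/- For a positive integer n, let k be the largest integer with k² ∣ n. Then the number of isomorphism classes of indecomposable solutions with n elements, of multipermutational level at most 2, with abelian permutation group, equals ∑_{d ∣ k} k/d = σ(k) (the sum of divisors of k). Equivalently, the number of triples (n₁,n₂,r) with n₁n₂ = n, n₁ ∣ n₂, 0 ≤ r < n₂/n₁ and n₂ ∣ n₁r² equals σ(k). -/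
/-!
Write `n = k² a`; maximality of `k` makes `a` squarefree. Comparing `p`-adic valuations (those of
`a` are at most one) gives `m² ∣ k² a ↔ m ∣ k` and `k² a ∣ x² ↔ k a ∣ x`. Hence in an admissible
triple `(n₁, n₂, r)` we have `n₁ ∣ k`, say `k = n₁ c`, then `n₂ = n₁ c² a`, and the last condition
reads `c a ∣ r`, so that `r = j c a` with `0 ≤ j < c`: the divisor `n₁` of `k` accounts for
exactly `c = k / n₁` triples.
-/

open Finset

namespace Nat

lemma sq_dvd_sq_mul_squarefree_iff {k a m : ℕ} (hk : k ≠ 0) (ha : Squarefree a) :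
    m ^ 2 ∣ k ^ 2 * a ↔ m ∣ k := by
  refine ⟨fun h => ?_, fun h => (pow_dvd_pow_of_dvd h 2).mul_right a⟩
  have hm : m ≠ 0 := by rintro rfl; simp [hk, ha.ne_zero] at h
  have hka : k ^ 2 * a ≠ 0 := mul_ne_zero (pow_ne_zero 2 hk) ha.ne_zero
  rw [← factorization_prime_le_iff_dvd (pow_ne_zero 2 hm) hka] at h
  rw [← factorization_prime_le_iff_dvd hm hk]
  intro p hp
  have hmp := h p hp
  simp only [factorization_mul (pow_ne_zero 2 hk) ha.ne_zero, factorization_pow,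
    Finsupp.add_apply, Finsupp.smul_apply, smul_eq_mul] at hmp
  have := ha.natFactorization_le_one p
  omega

lemma sq_mul_squarefree_dvd_sq_iff {k a x : ℕ} (hk : k ≠ 0) (ha : Squarefree a) :
    k ^ 2 * a ∣ x ^ 2 ↔ k * a ∣ x := by
  refine ⟨fun h => ?_, fun h => ?_⟩
  · rcases eq_or_ne x 0 with rfl | hx
    · exact dvd_zero _
    have hka : k ^ 2 * a ≠ 0 := mul_ne_zero (pow_ne_zero 2 hk) ha.ne_zero
    rw [← factorization_prime_le_iff_dvd hka (pow_ne_zero 2 hx)] at h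
    rw [← factorization_prime_le_iff_dvd (mul_ne_zero hk ha.ne_zero) hx]
    intro p hp
    have hxp := h p hp
    simp only [factorization_mul (pow_ne_zero 2 hk) ha.ne_zero, factorization_mul hk ha.ne_zero,
      factorization_pow, Finsupp.add_apply, Finsupp.smul_apply, smul_eq_mul] at hxp ⊢
    have := ha.natFactorization_le_one p
    omega
  · calc k ^ 2 * a ∣ (k * a) ^ 2 := ⟨a, by ring⟩
      _ ∣ x ^ 2 := pow_dvd_pow_of_dvd h 2

lemma squarefree_of_forall_sq_dvd_le {k a : ℕ} (hk : k ≠ 0)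
    (hmax : ∀ m : ℕ, m ^ 2 ∣ k ^ 2 * a → m ≤ k) : Squarefree a := by
  have ha : a ≠ 0 := by
    rintro rfl
    simpa using hmax (k + 1) (by simp)
  intro x hx
  have hx0 : x ≠ 0 := by rintro rfl; simp [ha] at hx
  have hkx : k * x ≤ k := hmax (k * x) (by rw [mul_pow, sq x]; exact mul_dvd_mul_left _ hx)
  rw [Nat.isUnit_iff]
  have := Nat.le_of_mul_le_mul_left (hkx.trans_eq (mul_one k).symm) (Nat.pos_of_ne_zero hk)
  omega

end Nat

/-- The parameters `(n₁, n₂, r)` of the solutions `C(n₁, n₂, r)` of size `n`. -/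
def admissibleTriples (n : ℕ) : Finset (ℕ × ℕ × ℕ) :=
  ((range (n + 1)) ×ˢ (range (n + 1)) ×ˢ (range (n + 1))).filter
    (fun t : ℕ × ℕ × ℕ => t.1 * t.2.1 = n ∧ t.1 ∣ t.2.1 ∧ t.2.2 < t.2.1 / t.1 ∧
      t.2.1 ∣ t.1 * t.2.2 ^ 2)

lemma mem_admissibleTriples {n : ℕ} (hn : n ≠ 0) {t : ℕ × ℕ × ℕ} :
    t ∈ admissibleTriples n ↔ t.1 * t.2.1 = n ∧ t.1 ∣ t.2.1 ∧ t.2.2 < t.2.1 / t.1 ∧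
      t.2.1 ∣ t.1 * t.2.2 ^ 2 := by
  obtain ⟨d, e, r⟩ := t
  simp only [admissibleTriples, mem_filter, mem_product, mem_range, and_iff_right_iff_imp]
  rintro ⟨hde, -, hr, -⟩
  have hd : d ≤ n := Nat.le_of_dvd (Nat.pos_of_ne_zero hn) ⟨e, hde.symm⟩
  have he : e ≤ n := Nat.le_of_dvd (Nat.pos_of_ne_zero hn) ⟨d, by rw [← hde, mul_comm]⟩
  have : e / d ≤ e := Nat.div_le_self e d
  omega

lemma mem_admissibleTriples_sq_mul_iff {k a : ℕ} (hk : k ≠ 0) (ha : Squarefree a)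
    {t : ℕ × ℕ × ℕ} :
    t ∈ admissibleTriples (k ^ 2 * a) ↔
      ∃ d c j : ℕ, d * c = k ∧ j < c ∧ t = (d, d * (c ^ 2 * a), c * a * j) := by
  have hka : k ^ 2 * a ≠ 0 := mul_ne_zero (pow_ne_zero 2 hk) ha.ne_zero
  obtain ⟨d, e, r⟩ := t
  rw [mem_admissibleTriples hka]
  dsimp only
  constructor
  · rintro ⟨hde, ⟨f, rfl⟩, hr, hdiv⟩
    have hd : d ≠ 0 := by rintro rfl; exact hka (hde.symm.trans (zero_mul _))
    obtain ⟨c, rfl⟩ : d ∣ k :=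
      (Nat.sq_dvd_sq_mul_squarefree_iff hk ha).1 ⟨f, by rw [← hde]; ring⟩
    have hc : c ≠ 0 := by rintro rfl; simp at hk
    obtain rfl : f = c ^ 2 * a :=
      Nat.eq_of_mul_eq_mul_left (Nat.pos_of_ne_zero (pow_ne_zero 2 hd))
        ((by ring : d ^ 2 * f = d * (d * f)).trans (hde.trans (by ring)))
    have hcr : c * a ∣ r := (Nat.sq_mul_squarefree_dvd_sq_iff hc ha).1 <|
      Nat.dvd_of_mul_dvd_mul_left (Nat.pos_of_ne_zero hd) hdiv
    obtain ⟨j, rfl⟩ := hcr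
    rw [Nat.mul_div_cancel_left _ (Nat.pos_of_ne_zero hd)] at hr
    exact ⟨d, c, j, rfl, Nat.lt_of_mul_lt_mul_left (hr.trans_eq (by ring)), rfl⟩
  · rintro ⟨d, c, j, rfl, hj, he⟩
    simp only [Prod.mk.injEq] at he
    obtain ⟨rfl, rfl, rfl⟩ := he
    obtain ⟨hd, hc⟩ := mul_ne_zero_iff.1 hk
    refine ⟨by ring, ⟨c ^ 2 * a, by ring⟩, ?_, ⟨j ^ 2 * a, by ring⟩⟩
    rw [Nat.mul_div_cancel_left _ (Nat.pos_of_ne_zero hd)]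
    have hca : 0 < c * a := Nat.pos_of_ne_zero (mul_ne_zero hc ha.ne_zero)
    calc c * a * j < c * a * c := Nat.mul_lt_mul_of_pos_left hj hca
      _ = c ^ 2 * a := by ring

lemma card_admissibleTriples_sq_mul {k a : ℕ} (hk : k ≠ 0) (ha : Squarefree a) :
    #(admissibleTriples (k ^ 2 * a)) = ∑ p ∈ k.divisorsAntidiagonal, p.2 := by
  have hcard : ∑ p ∈ k.divisorsAntidiagonal, p.2 =
      #(k.divisorsAntidiagonal.sigma fun p => range p.2) := by
    simp only [card_sigma, card_range]
  rw [hcard]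
  symm
  apply card_nbij (fun x => (x.1.1, x.1.1 * (x.1.2 ^ 2 * a), x.1.2 * a * x.2))
  · rintro ⟨⟨d, c⟩, j⟩ h
    simp only [coe_sigma, Set.mem_sigma_iff, mem_coe, Nat.mem_divisorsAntidiagonal,
      mem_range] at h
    exact (mem_admissibleTriples_sq_mul_iff hk ha).2 ⟨d, c, j, h.1.1, h.2, rfl⟩
  · rintro ⟨⟨d, c⟩, j⟩ h ⟨⟨d', c'⟩, j'⟩ h' heq
    simp only [coe_sigma, Set.mem_sigma_iff, mem_coe, Nat.mem_divisorsAntidiagonal,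
      mem_range] at h h'
    simp only [Prod.mk.injEq] at heq
    obtain ⟨rfl, -, hj⟩ := heq
    obtain ⟨hd, hc⟩ := mul_ne_zero_iff.1 (h.1.1 ▸ h.1.2)
    obtain rfl : c = c' :=
      Nat.eq_of_mul_eq_mul_left (Nat.pos_of_ne_zero hd) (h.1.1.trans h'.1.1.symm)
    obtain rfl : j = j' :=
      Nat.eq_of_mul_eq_mul_left (Nat.pos_of_ne_zero (mul_ne_zero hc ha.ne_zero)) hj
    rfl
  · intro t ht
    obtain ⟨d, c, j, hdc, hj, rfl⟩ := (mem_admissibleTriples_sq_mul_iff hk ha).1 ht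
    exact ⟨⟨(d, c), j⟩, by simp [hdc, hk, hj], rfl⟩

theorem count_solutions_general (n k : ℕ) (hk : k ^ 2 ∣ n)
    (hmax : ∀ m : ℕ, m ^ 2 ∣ n → m ≤ k) :
    (((Finset.range (n + 1)) ×ˢ (Finset.range (n + 1)) ×ˢ (Finset.range (n + 1))).filter
        (fun t : ℕ × ℕ × ℕ => t.1 * t.2.1 = n ∧ t.1 ∣ t.2.1 ∧ t.2.2 < t.2.1 / t.1 ∧
          t.2.1 ∣ t.1 * t.2.2 ^ 2)).card = ∑ d ∈ k.divisors, k / d ∧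
    (∑ d ∈ k.divisors, k / d) = ∑ d ∈ k.divisors, d := by
  obtain ⟨a, rfl⟩ := hk
  have hk0 : k ≠ 0 := Nat.one_le_iff_ne_zero.1 (hmax 1 (by simp))
  refine ⟨?_, Nat.sum_div_divisors k id⟩
  rw [← Nat.sum_divisorsAntidiagonal fun _ c => c]
  exact card_admissibleTriples_sq_mul hk0 (Nat.squarefree_of_forall_sq_dvd_le hk0 hmax)

/-- if `k` is the largest integer with `k² ∣ n`, then the number of
admissible parameter triples `(n₁, n₂, r)` — i.e. of indecomposable solutions with `n`
elements of multipermutational level at most 2 with abelian permutation group — equals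
`∑_{d ∣ k} k/d`, the sum of divisors of `k`. -/
theorem count_solutions (n k : ℕ) (hn : 0 < n) (hk : k ^ 2 ∣ n)
    (hmax : ∀ m : ℕ, m ^ 2 ∣ n → m ≤ k) :
    (((Finset.range (n + 1)) ×ˢ (Finset.range (n + 1)) ×ˢ (Finset.range (n + 1))).filter
        (fun t : ℕ × ℕ × ℕ => t.1 * t.2.1 = n ∧ t.1 ∣ t.2.1 ∧ t.2.2 < t.2.1 / t.1 ∧
          t.2.1 ∣ t.1 * t.2.2 ^ 2)).card = ∑ d ∈ k.divisors, k / d ∧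
    (∑ d ∈ k.divisors, k / d) = ∑ d ∈ k.divisors, d :=
  count_solutions_general n k hk hmax
end

section
/- For a positive integer n, the number of r with 0 ≤ r < n and n ∣ r² equals the largest integer k such that k² ∣ n. Consequently there are exactly k indecomposable solutions of size n of multipermutational level at most 2 with cyclic permutation group. -/
/-- lcm of squares is the square of the lcm. -/
lemma lcm_sq (j k : ℕ) : Nat.lcm (j ^ 2) (k ^ 2) = Nat.lcm j k ^ 2 := by
  rcases Nat.eq_zero_or_pos (Nat.gcd j k) with hg | hg
  · rcases Nat.gcd_eq_zero_iff.mp hg with ⟨rfl, rfl⟩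
    simp
  · set g := Nat.gcd j k with hgdef
    obtain ⟨a, ha⟩ : g ∣ j := Nat.gcd_dvd_left j k
    obtain ⟨b, hb⟩ : g ∣ k := Nat.gcd_dvd_right j k
    have hco : Nat.Coprime a b := by
      have := Nat.coprime_div_gcd_div_gcd (m := j) (n := k) hg
      rwa [← hgdef, ha, hb, Nat.mul_div_cancel_left a hg,
        Nat.mul_div_cancel_left b hg] at this
    have h1 : Nat.lcm j k = g * (a * b) := by
      rw [ha, hb, Nat.lcm_mul_left, Nat.Coprime.lcm_eq_mul hco]
    have h2 : Nat.lcm (j ^ 2) (k ^ 2) = g ^ 2 * (a ^ 2 * b ^ 2) := by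
      rw [ha, hb, mul_pow, mul_pow, Nat.lcm_mul_left,
        Nat.Coprime.lcm_eq_mul (Nat.Coprime.pow 2 2 hco)]
    rw [h2, h1]; ring

/-- the number of `r` with `0 ≤ r < n` and `n ∣ r²` — i.e. the number of
indecomposable solutions of size `n` of multipermutational level at most 2 with cyclic
permutation group — equals the largest `k` with `k² ∣ n`. -/
theorem count_cyclic_solutions (n k : ℕ) (hn : 0 < n) (hk : k ^ 2 ∣ n)
    (hmax : ∀ m : ℕ, m ^ 2 ∣ n → m ≤ k) :
    ((Finset.range n).filter fun r => n ∣ r ^ 2).card = k := by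
  have hk1 : 0 < k := hmax 1 (by simpa using Nat.one_dvd n)
  have hkd : k ∣ n := (dvd_pow_self k (two_ne_zero)).trans hk
  set m := n / k with hm
  have hmk : m * k = n := Nat.div_mul_cancel hkd
  have hm0 : 0 < m := by
    rcases Nat.eq_zero_or_pos m with h | h
    · rw [h, zero_mul] at hmk; omega
    · exact h
  -- n divides m^2
  have hnm2 : n ∣ m ^ 2 := by
    obtain ⟨s, hs⟩ := hk
    have : m = k * s := by
      have : m * k = k * s * k := by rw [hmk, hs]; ring
      exact Nat.eq_of_mul_eq_mul_right hk1 (by linarith [this])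
    refine ⟨s, ?_⟩
    rw [this, hs]; ring
  -- key equivalence
  have key : ∀ r, n ∣ r ^ 2 ↔ m ∣ r := by
    intro r
    constructor
    · intro hr
      rcases Nat.eq_zero_or_pos r with rfl | hr0
      · exact dvd_zero m
      set d := Nat.gcd r n with hd
      have hd0 : 0 < d := Nat.gcd_pos_of_pos_right r hn
      obtain ⟨a, hra⟩ : d ∣ r := Nat.gcd_dvd_left r n
      obtain ⟨b, hnb⟩ : d ∣ n := Nat.gcd_dvd_right r n
      have hco : Nat.Coprime a b := by
        have := Nat.coprime_div_gcd_div_gcd (m := r) (n := n) hd0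
        rwa [← hd, hra, hnb, Nat.mul_div_cancel_left a hd0,
          Nat.mul_div_cancel_left b hd0] at this
      have hb0 : 0 < b := by
        rcases Nat.eq_zero_or_pos b with rfl | h
        · simp at hnb; omega
        · exact h
      -- b ∣ d
      have hbd : b ∣ d := by
        have h1 : d * b ∣ d * (d * a ^ 2) := by
          have : r ^ 2 = d * (d * a ^ 2) := by rw [hra]; ring
          rw [← this, ← hnb]; exact hr
        have h2 : b ∣ d * a ^ 2 := (mul_dvd_mul_iff_left (by omega : d ≠ 0)).mp h1
        exact (hco.symm.pow_right 2).dvd_of_dvd_mul_right h2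
      -- so b^2 ∣ n
      have hb2 : b ^ 2 ∣ n := by
        obtain ⟨t, ht⟩ := hbd
        exact ⟨t, by rw [hnb, ht]; ring⟩
      -- lcm b k squared divides n, so by maximality lcm b k = k, so b ∣ k
      have hl2 : Nat.lcm b k ^ 2 ∣ n := by
        rw [← lcm_sq]; exact Nat.lcm_dvd hb2 hk
      have hlk : Nat.lcm b k = k := by
        have h1 : Nat.lcm b k ≤ k := hmax _ hl2
        have h2 : k ∣ Nat.lcm b k := Nat.dvd_lcm_right b k
        have h3 : 0 < Nat.lcm b k := Nat.lcm_pos hb0 hk1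
        exact Nat.le_antisymm h1 (Nat.le_of_dvd h3 h2)
      have hbk : b ∣ k := hlk ▸ Nat.dvd_lcm_left b k
      -- m ∣ d
      obtain ⟨t, ht⟩ := hbk
      have hdmt : d = m * t := by
        have h1 : b * d = b * (m * t) := by
          have : b * d = n := by rw [hnb]; ring
          rw [this, ← hmk, ht]; ring
        exact Nat.eq_of_mul_eq_mul_left hb0 h1
      exact Dvd.dvd.trans ⟨t, hdmt⟩ ⟨a, hra⟩
    · intro hr
      obtain ⟨c, hc⟩ := hr
      obtain ⟨s, hs⟩ := hnm2
      exact ⟨s * c ^ 2, by rw [hc, mul_pow, hs]; ring⟩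
  -- now count multiples of m below n = m * k
  have himg : (Finset.range n).filter (fun r => n ∣ r ^ 2)
      = (Finset.range k).image (fun i => i * m) := by
    ext r
    simp only [Finset.mem_filter, Finset.mem_range, Finset.mem_image]
    constructor
    · rintro ⟨hrn, hr⟩
      obtain ⟨c, hc⟩ := (key r).mp hr
      refine ⟨c, ?_, by rw [hc, mul_comm]⟩
      have h := hrn
      rw [hc, ← hmk] at h
      exact Nat.lt_of_mul_lt_mul_left h
    · rintro ⟨i, hi, rfl⟩
      refine ⟨?_, (key _).mpr ⟨i, mul_comm i m⟩⟩
      calc i * m < k * m := (Nat.mul_lt_mul_right hm0).mpr hi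
        _ = n := by rw [← hmk]; ring
  rw [himg, Finset.card_image_of_injective _ (fun a b h => Nat.eq_of_mul_eq_mul_right hm0 h),
    Finset.card_range]
end

section
/- For the solution C(n₁,n₂,r), the maps f_{(s,t)} : (a,i) ↦ (s + a + δ_{(a,i)}δ_{(s,t)}, t + i + r·δ_{(a,i)}δ_{(s,t)}), where δ_{(a,i)} = i − ar, are exactly the endomorphisms of the solution; each is an automorphism (with inverse f_{(δ²_{(s,t)} − s, rδ²_{(s,t)} − t)}), they pairwise commute, and the automorphism group acts regularly on X. In particular every endomorphism of C(n₁,n₂,r) is an automorphism and Aut(X) is a regular abelian group. -/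
/-- `δ_{(a,i)} = i - ar`. -/
def Cdelta {n₁ n₂ : ℕ} (r : ℕ) (x : ZMod n₁ × ZMod n₂) : ZMod n₂ :=
  x.2 - (x.1.val : ZMod n₂) * (r : ZMod n₂)

/-- The map `f_{(s,t)} : (a,i) ↦ (s + a + δ_{(a,i)}δ_{(s,t)}, t + i + r·δ_{(a,i)}δ_{(s,t)})`. -/
def Cf {n₁ n₂ : ℕ} (hd : n₁ ∣ n₂) (r : ℕ) (s x : ZMod n₁ × ZMod n₂) : ZMod n₁ × ZMod n₂ :=
  (s.1 + x.1 + ZMod.castHom hd (ZMod n₁) (Cdelta r x * Cdelta r s),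
   s.2 + x.2 + (r : ZMod n₂) * (Cdelta r x * Cdelta r s))

section Aux

variable {n₁ n₂ r : ℕ}

lemma CAux.val_int (h1 : 0 < n₁) (x : ℤ) :
    ∃ k : ℤ, (((x : ZMod n₁).val : ℤ)) = x - n₁ * k := by
  haveI : NeZero n₁ := ⟨h1.ne'⟩
  have h : ((x - ((x : ZMod n₁).val : ℤ) : ℤ) : ZMod n₁) = 0 := by
    push_cast
    rw [ZMod.natCast_val, ZMod.cast_id]
    ring
  obtain ⟨k, hk⟩ := (ZMod.intCast_zmod_eq_zero_iff_dvd _ _).mp h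
  exact ⟨k, by linarith⟩

lemma CAux.h0 (h2 : 0 < n₂) (hr2 : n₂ ∣ n₁ * r ^ 2) :
    ((n₁ : ZMod n₂)) * (r : ZMod n₂) ^ 2 = 0 := by
  haveI : NeZero n₂ := ⟨h2.ne'⟩
  have := (ZMod.natCast_eq_zero_iff (n₁ * r ^ 2) n₂).mpr hr2
  push_cast at this
  linear_combination this

lemma CAux.csigma_int (h1 : 0 < n₁) (h2 : 0 < n₂) (hd : n₁ ∣ n₂) (hr2 : n₂ ∣ n₁ * r ^ 2)
    (a i b j : ℤ) :
    Csigma hd r ((a : ZMod n₁), (i : ZMod n₂)) ((b : ZMod n₁), (j : ZMod n₂)) =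
      (((b - a * r + i : ℤ) : ZMod n₁), ((j + i * r - a * r ^ 2 + 1 : ℤ) : ZMod n₂)) := by
  obtain ⟨k, hk⟩ := CAux.val_int h1 a
  have hve : ((((a : ZMod n₁).val : ℕ) : ZMod n₂)) = ((a - n₁ * k : ℤ) : ZMod n₂) := by
    rw [← hk]; push_cast; ring
  have h0 := CAux.h0 (n₁ := n₁) (r := r) h2 hr2
  unfold Csigma
  simp only [Prod.mk.injEq]
  constructor
  · simp only [map_intCast]
    push_cast
    ring
  · rw [hve]
    push_cast
    linear_combination ((k : ZMod n₂)) * h0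

lemma CAux.cf_int (h1 : 0 < n₁) (h2 : 0 < n₂) (hd : n₁ ∣ n₂) (hr2 : n₂ ∣ n₁ * r ^ 2)
    (s t a i : ℤ) :
    Cf hd r ((s : ZMod n₁), (t : ZMod n₂)) ((a : ZMod n₁), (i : ZMod n₂)) =
      (((s + a + (i - a * r) * (t - s * r) : ℤ) : ZMod n₁),
       ((t + i + r * (i - a * r) * (t - s * r) : ℤ) : ZMod n₂)) := by
  obtain ⟨k₁, hk₁⟩ := CAux.val_int h1 a
  obtain ⟨k₂, hk₂⟩ := CAux.val_int h1 s
  have hv₁ : ((((a : ZMod n₁).val : ℕ) : ZMod n₂)) = ((a - n₁ * k₁ : ℤ) : ZMod n₂) := by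
    rw [← hk₁]; push_cast; ring
  have hv₂ : ((((s : ZMod n₁).val : ℕ) : ZMod n₂)) = ((s - n₁ * k₂ : ℤ) : ZMod n₂) := by
    rw [← hk₂]; push_cast; ring
  have h0 := CAux.h0 (n₁ := n₁) (r := r) h2 hr2
  have hn1 : ((n₁ : ℕ) : ZMod n₁) = 0 := ZMod.natCast_self n₁
  unfold Cf Cdelta
  simp only [Prod.mk.injEq, hv₁, hv₂]
  constructor
  · simp only [map_mul, map_sub, map_add, map_intCast, map_natCast]
    push_cast
    linear_combination ((k₂ : ZMod n₁) * r * ((i : ZMod n₁) - a * r)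
      + (k₁ : ZMod n₁) * r * ((t : ZMod n₁) - s * r)
      + (n₁ : ZMod n₁) * k₁ * k₂ * r ^ 2) * hn1
  · push_cast
    linear_combination ((k₂ : ZMod n₂) * ((i : ZMod n₂) - a * r)
      + (k₁ : ZMod n₂) * ((t : ZMod n₂) - s * r)
      + (n₁ : ZMod n₂) * k₁ * k₂ * r) * h0

end Aux
section Aux2
variable {n₁ n₂ r : ℕ}

lemma CAux.inv_pair (h1 : 0 < n₁) (h2 : 0 < n₂) (hd : n₁ ∣ n₂) (hr2 : n₂ ∣ n₁ * r ^ 2)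
    (s t : ℤ) :
    ((ZMod.castHom hd (ZMod n₁) (Cdelta r ((s : ZMod n₁), (t : ZMod n₂)) ^ 2)
        - ((s : ZMod n₁)) : ZMod n₁),
     ((r : ZMod n₂) * Cdelta r ((s : ZMod n₁), (t : ZMod n₂)) ^ 2 - ((t : ZMod n₂)) : ZMod n₂)) =
      ((((t - s * r) ^ 2 - s : ℤ) : ZMod n₁), ((r * (t - s * r) ^ 2 - t : ℤ) : ZMod n₂)) := by
  obtain ⟨k, hk⟩ := CAux.val_int h1 s
  have hv : ((((s : ZMod n₁).val : ℕ) : ZMod n₂)) = ((s - n₁ * k : ℤ) : ZMod n₂) := by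
    rw [← hk]; push_cast; ring
  have h0 := CAux.h0 (n₁ := n₁) (r := r) h2 hr2
  have hn1 : ((n₁ : ℕ) : ZMod n₁) = 0 := ZMod.natCast_self n₁
  unfold Cdelta
  simp only [Prod.mk.injEq, hv]
  constructor
  · simp only [map_pow, map_sub, map_mul, map_intCast, map_natCast]
    push_cast
    linear_combination ((2 : ZMod n₁) * k * r * ((t : ZMod n₁) - s * r)
      + (n₁ : ZMod n₁) * k ^ 2 * r ^ 2) * hn1
  · push_cast
    linear_combination ((2 : ZMod n₂) * k * ((t : ZMod n₂) - s * r)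
      + (n₁ : ZMod n₂) * k ^ 2 * r) * h0

end Aux2

section Parts
variable {n₁ n₂ r : ℕ}

lemma CAux.part1 (h1 : 0 < n₁) (h2 : 0 < n₂) (hd : n₁ ∣ n₂) (hr2 : n₂ ∣ n₁ * r ^ 2) :
    ∀ s x, Cf hd r s ∘ Csigma hd r x = Csigma hd r (Cf hd r s x) ∘ Cf hd r s := by
  haveI : NeZero n₁ := ⟨h1.ne'⟩
  haveI : NeZero n₂ := ⟨h2.ne'⟩
  intro s x
  funext y
  obtain ⟨s₁, s₂⟩ := s
  obtain ⟨x₁, x₂⟩ := x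
  obtain ⟨y₁, y₂⟩ := y
  obtain ⟨S, hS⟩ := ZMod.intCast_surjective s₁
  obtain ⟨T, hT⟩ := ZMod.intCast_surjective s₂
  obtain ⟨A, hA⟩ := ZMod.intCast_surjective x₁
  obtain ⟨I, hI⟩ := ZMod.intCast_surjective x₂
  obtain ⟨B, hB⟩ := ZMod.intCast_surjective y₁
  obtain ⟨J, hJ⟩ := ZMod.intCast_surjective y₂
  subst hS hT hA hI hB hJ
  simp only [Function.comp_apply]
  rw [CAux.csigma_int h1 h2 hd hr2, CAux.cf_int h1 h2 hd hr2, CAux.cf_int h1 h2 hd hr2,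
    CAux.cf_int h1 h2 hd hr2, CAux.csigma_int h1 h2 hd hr2]
  simp only [Prod.mk.injEq]
  constructor <;> · push_cast; ring

lemma CAux.part4 (h1 : 0 < n₁) (h2 : 0 < n₂) (hd : n₁ ∣ n₂) (hr2 : n₂ ∣ n₁ * r ^ 2) :
    ∀ s : ZMod n₁ × ZMod n₂, Function.LeftInverse
        (Cf hd r (ZMod.castHom hd (ZMod n₁) (Cdelta r s ^ 2) - s.1,
          (r : ZMod n₂) * Cdelta r s ^ 2 - s.2)) (Cf hd r s) ∧
      Function.RightInverse
        (Cf hd r (ZMod.castHom hd (ZMod n₁) (Cdelta r s ^ 2) - s.1,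
          (r : ZMod n₂) * Cdelta r s ^ 2 - s.2)) (Cf hd r s) := by
  haveI : NeZero n₁ := ⟨h1.ne'⟩
  haveI : NeZero n₂ := ⟨h2.ne'⟩
  intro s
  obtain ⟨s₁, s₂⟩ := s
  obtain ⟨S, hS⟩ := ZMod.intCast_surjective s₁
  obtain ⟨T, hT⟩ := ZMod.intCast_surjective s₂
  subst hS hT
  have hpair : ((ZMod.castHom hd (ZMod n₁) (Cdelta r ((S : ZMod n₁), (T : ZMod n₂)) ^ 2)
        - ((S : ZMod n₁))),
     ((r : ZMod n₂) * Cdelta r ((S : ZMod n₁), (T : ZMod n₂)) ^ 2 - ((T : ZMod n₂)))) =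
      ((((T - S * r) ^ 2 - S : ℤ) : ZMod n₁), ((r * (T - S * r) ^ 2 - T : ℤ) : ZMod n₂)) :=
    CAux.inv_pair h1 h2 hd hr2 S T
  constructor <;>
  · intro x
    obtain ⟨x₁, x₂⟩ := x
    obtain ⟨A, hA⟩ := ZMod.intCast_surjective x₁
    obtain ⟨I, hI⟩ := ZMod.intCast_surjective x₂
    subst hA hI
    rw [hpair, CAux.cf_int h1 h2 hd hr2, CAux.cf_int h1 h2 hd hr2]
    simp only [Prod.mk.injEq]
    constructor <;> · push_cast; ring

lemma CAux.part5 (h1 : 0 < n₁) (h2 : 0 < n₂) (hd : n₁ ∣ n₂) (hr2 : n₂ ∣ n₁ * r ^ 2) :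
    ∀ s t, Cf hd r s ∘ Cf hd r t = Cf hd r t ∘ Cf hd r s := by
  haveI : NeZero n₁ := ⟨h1.ne'⟩
  haveI : NeZero n₂ := ⟨h2.ne'⟩
  intro s t
  funext x
  obtain ⟨s₁, s₂⟩ := s
  obtain ⟨t₁, t₂⟩ := t
  obtain ⟨x₁, x₂⟩ := x
  obtain ⟨S, hS⟩ := ZMod.intCast_surjective s₁
  obtain ⟨T, hT⟩ := ZMod.intCast_surjective s₂
  obtain ⟨U, hU⟩ := ZMod.intCast_surjective t₁
  obtain ⟨W, hW⟩ := ZMod.intCast_surjective t₂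
  obtain ⟨A, hA⟩ := ZMod.intCast_surjective x₁
  obtain ⟨I, hI⟩ := ZMod.intCast_surjective x₂
  subst hS hT hU hW hA hI
  simp only [Function.comp_apply]
  rw [CAux.cf_int h1 h2 hd hr2, CAux.cf_int h1 h2 hd hr2, CAux.cf_int h1 h2 hd hr2,
    CAux.cf_int h1 h2 hd hr2]
  simp only [Prod.mk.injEq]
  constructor <;> · push_cast; ring

lemma CAux.part6 (h1 : 0 < n₁) (h2 : 0 < n₂) (hd : n₁ ∣ n₂) (hr2 : n₂ ∣ n₁ * r ^ 2) :
    ∀ x y : ZMod n₁ × ZMod n₂, ∃! s, Cf hd r s x = y := by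
  haveI : NeZero n₁ := ⟨h1.ne'⟩
  haveI : NeZero n₂ := ⟨h2.ne'⟩
  intro x y
  obtain ⟨x₁, x₂⟩ := x
  obtain ⟨y₁, y₂⟩ := y
  obtain ⟨A, hA⟩ := ZMod.intCast_surjective x₁
  obtain ⟨I, hI⟩ := ZMod.intCast_surjective x₂
  obtain ⟨B, hB⟩ := ZMod.intCast_surjective y₁
  obtain ⟨J, hJ⟩ := ZMod.intCast_surjective y₂
  subst hA hI hB hJ
  refine ⟨(((B - A - (I - A * r) * ((J - B * r) - (I - A * r)) : ℤ) : ZMod n₁),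
    ((J - I - (I - A * r) * (r * (J - B * r) - r * (I - A * r)) : ℤ) : ZMod n₂)), ?_, ?_⟩
  · dsimp only
    rw [CAux.cf_int h1 h2 hd hr2]
    simp only [Prod.mk.injEq]
    constructor <;> · push_cast; ring
  · rintro ⟨s₁, s₂⟩ hs
    obtain ⟨S, hS⟩ := ZMod.intCast_surjective s₁
    obtain ⟨T, hT⟩ := ZMod.intCast_surjective s₂
    subst hS hT
    rw [CAux.cf_int h1 h2 hd hr2] at hs
    simp only [Prod.mk.injEq] at hs ⊢
    obtain ⟨e₁, e₂⟩ := hs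
    have hm₁ : ∃ m₁ : ℤ, B = (S + A + (I - A * r) * (T - S * r)) + n₁ * m₁ := by
      have : ((B - (S + A + (I - A * r) * (T - S * r)) : ℤ) : ZMod n₁) = 0 := by
        push_cast
        push_cast at e₁
        linear_combination -e₁
      obtain ⟨m, hm⟩ := (ZMod.intCast_zmod_eq_zero_iff_dvd _ _).mp this
      exact ⟨m, by linarith⟩
    have hm₂ : ∃ m₂ : ℤ, J = (T + I + r * (I - A * r) * (T - S * r)) + n₂ * m₂ := by
      have : ((J - (T + I + r * (I - A * r) * (T - S * r)) : ℤ) : ZMod n₂) = 0 := by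
        push_cast
        push_cast at e₂
        linear_combination -e₂
      obtain ⟨m, hm⟩ := (ZMod.intCast_zmod_eq_zero_iff_dvd _ _).mp this
      exact ⟨m, by linarith⟩
    obtain ⟨m₁, hB'⟩ := hm₁
    obtain ⟨m₂, hJ'⟩ := hm₂
    have h0 := CAux.h0 (n₁ := n₁) (r := r) h2 hr2
    have hn1 : ((n₁ : ℕ) : ZMod n₁) = 0 := ZMod.natCast_self n₁
    have hn2 : ((n₂ : ℕ) : ZMod n₂) = 0 := ZMod.natCast_self n₂
    have hn21 : ((n₂ : ℕ) : ZMod n₁) = 0 := by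
      obtain ⟨c, hc⟩ := hd
      rw [hc]; push_cast; rw [ZMod.natCast_self]; ring
    constructor
    · rw [hB', hJ']
      push_cast
      linear_combination (-((m₁ : ZMod n₁) * (1 + (I : ZMod n₁) * r - A * r ^ 2))) * hn1
        + ((m₂ : ZMod n₁) * ((I : ZMod n₁) - A * r)) * hn21
    · rw [hB', hJ']
      push_cast
      linear_combination (-((m₂ : ZMod n₂) * (1 - (I : ZMod n₂) * r + A * r ^ 2))) * hn2
        + (-((m₁ : ZMod n₂) * ((I : ZMod n₂) - A * r))) * h0

end Parts
section Class
variable {n₁ n₂ r : ℕ}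

lemma CAux.part2 (h1 : 0 < n₁) (h2 : 0 < n₂) (hd : n₁ ∣ n₂) (hr2 : n₂ ∣ n₁ * r ^ 2) :
    ∀ f : ZMod n₁ × ZMod n₂ → ZMod n₁ × ZMod n₂,
      (∀ x, f ∘ Csigma hd r x = Csigma hd r (f x) ∘ f) → ∃ s, f = Cf hd r s := by
  haveI : NeZero n₁ := ⟨h1.ne'⟩
  haveI : NeZero n₂ := ⟨h2.ne'⟩
  intro f hf
  obtain ⟨G, hG⟩ := ZMod.intCast_surjective (f (0, 0)).1
  obtain ⟨H, hH⟩ := ZMod.intCast_surjective (f (0, 0)).2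
  have hf00 : f (0, 0) = ((G : ZMod n₁), (H : ZMod n₂)) := by
    rw [hG, hH]
  have h0 := CAux.h0 (n₁ := n₁) (r := r) h2 hr2
  have hσ0 : ∀ p : ZMod n₁ × ZMod n₂, Csigma hd r (0, 0) p = (p.1, p.2 + 1) := by
    intro p
    unfold Csigma
    simp
  have hstep : ∀ p : ZMod n₁ × ZMod n₂, f (p.1, p.2 + 1)
      = ((f p).1 + ((H - G * r : ℤ) : ZMod n₁),
         (f p).2 + ((H * r - G * r ^ 2 + 1 : ℤ) : ZMod n₂)) := by
    intro p
    have hc := congrFun (hf (0, 0)) p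
    simp only [Function.comp_apply] at hc
    rw [hσ0] at hc
    rw [hc, hf00]
    obtain ⟨k, hk⟩ := CAux.val_int h1 G
    have hv : ((((G : ZMod n₁).val : ℕ) : ZMod n₂)) = ((G - n₁ * k : ℤ) : ZMod n₂) := by
      rw [← hk]; push_cast; ring
    unfold Csigma
    simp only [Prod.mk.injEq, hv]
    constructor
    · simp only [map_intCast]; push_cast; ring
    · push_cast; linear_combination ((k : ZMod n₂)) * h0
  have hiter : ∀ (m : ℕ) (p : ZMod n₁ × ZMod n₂), f (p.1, p.2 + (m : ZMod n₂))
      = ((f p).1 + (m : ZMod n₁) * ((H - G * r : ℤ) : ZMod n₁),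
         (f p).2 + (m : ZMod n₂) * ((H * r - G * r ^ 2 + 1 : ℤ) : ZMod n₂)) := by
    intro m
    induction m with
    | zero => intro p; simp
    | succ m ih =>
      intro p
      have e1 : ((m + 1 : ℕ) : ZMod n₂) = ((m : ℕ) : ZMod n₂) + 1 := by push_cast; ring
      rw [e1, ← add_assoc]
      have h' := hstep (p.1, p.2 + (m : ZMod n₂))
      dsimp only at h'
      rw [h', ih p]
      simp only [Prod.mk.injEq]
      constructor <;> · push_cast; ring
  have hjj : ∀ (b : ZMod n₁) (j : ZMod n₂), f (b, j)
      = ((f (b, 0)).1 + ZMod.castHom hd (ZMod n₁) j * ((H - G * r : ℤ) : ZMod n₁),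
         (f (b, 0)).2 + j * ((H * r - G * r ^ 2 + 1 : ℤ) : ZMod n₂)) := by
    intro b j
    have h' := hiter j.val (b, 0)
    dsimp only at h'
    simp only [ZMod.natCast_val, ZMod.cast_id, zero_add] at h'
    rw [ZMod.castHom_apply]
    exact h'
  refine ⟨((G : ZMod n₁), (H : ZMod n₂)), ?_⟩
  funext p
  obtain ⟨b, j⟩ := p
  obtain ⟨B, hB⟩ := ZMod.intCast_surjective b
  obtain ⟨J, hJ⟩ := ZMod.intCast_surjective j
  subst hB hJ
  have hfa : f ((0 : ZMod n₁), ((B : ℤ) : ZMod n₂))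
      = (((G + B * (H - G * r) : ℤ) : ZMod n₁),
         ((H + B * (H * r - G * r ^ 2 + 1) : ℤ) : ZMod n₂)) := by
    rw [hjj 0 ((B : ℤ) : ZMod n₂), hf00]
    simp only [Prod.mk.injEq, map_intCast]
    constructor <;> · push_cast; ring
  have hfb : f ((0 : ZMod n₁), ((-(B * r) - 1 : ℤ) : ZMod n₂))
      = (((G + (-(B * r) - 1) * (H - G * r) : ℤ) : ZMod n₁),
         ((H + (-(B * r) - 1) * (H * r - G * r ^ 2 + 1) : ℤ) : ZMod n₂)) := by
    rw [hjj 0 ((-(B * r) - 1 : ℤ) : ZMod n₂), hf00]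
    simp only [Prod.mk.injEq, map_intCast]
    constructor <;> · push_cast; ring
  have hkey : Csigma hd r ((0 : ZMod n₁), ((B : ℤ) : ZMod n₂))
        ((0 : ZMod n₁), ((-(B * r) - 1 : ℤ) : ZMod n₂))
      = (((B : ℤ) : ZMod n₁), (0 : ZMod n₂)) := by
    have h := CAux.csigma_int h1 h2 hd hr2 0 B 0 (-(B * r) - 1)
    push_cast at h
    convert h using 2 <;> · push_cast; ring
  have hfb0 := congrFun (hf ((0 : ZMod n₁), ((B : ℤ) : ZMod n₂)))
    ((0 : ZMod n₁), ((-(B * r) - 1 : ℤ) : ZMod n₂))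
  simp only [Function.comp_apply] at hfb0
  rw [hkey, hfa, hfb, CAux.csigma_int h1 h2 hd hr2] at hfb0
  rw [hjj ((B : ℤ) : ZMod n₁) ((J : ℤ) : ZMod n₂), hfb0, CAux.cf_int h1 h2 hd hr2]
  simp only [Prod.mk.injEq, map_intCast]
  constructor <;> · push_cast; ring

end Class
/-- the maps `f_{(s,t)}` are exactly the endomorphisms of `C(n₁,n₂,r)`;
every endomorphism is an automorphism, `f_{(s,t)}⁻¹ = f_{(δ²-s, rδ²-t)}`, they pairwise
commute, and the automorphism group acts regularly on `X`. -/
theorem Csigma_automorphisms (n₁ n₂ r : ℕ) (h1 : 0 < n₁) (h2 : 0 < n₂) (hd : n₁ ∣ n₂)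
    (hr : r < n₂ / n₁) (hr2 : n₂ ∣ n₁ * r ^ 2) :
    (∀ s x, Cf hd r s ∘ Csigma hd r x = Csigma hd r (Cf hd r s x) ∘ Cf hd r s) ∧
    (∀ f : ZMod n₁ × ZMod n₂ → ZMod n₁ × ZMod n₂,
      (∀ x, f ∘ Csigma hd r x = Csigma hd r (f x) ∘ f) → ∃ s, f = Cf hd r s) ∧
    (∀ f : ZMod n₁ × ZMod n₂ → ZMod n₁ × ZMod n₂,
      (∀ x, f ∘ Csigma hd r x = Csigma hd r (f x) ∘ f) → Function.Bijective f) ∧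
    (∀ s, Function.LeftInverse
        (Cf hd r (ZMod.castHom hd (ZMod n₁) (Cdelta r s ^ 2) - s.1,
          (r : ZMod n₂) * Cdelta r s ^ 2 - s.2)) (Cf hd r s) ∧
      Function.RightInverse
        (Cf hd r (ZMod.castHom hd (ZMod n₁) (Cdelta r s ^ 2) - s.1,
          (r : ZMod n₂) * Cdelta r s ^ 2 - s.2)) (Cf hd r s)) ∧
    (∀ s t, Cf hd r s ∘ Cf hd r t = Cf hd r t ∘ Cf hd r s) ∧
    (∀ x y : ZMod n₁ × ZMod n₂, ∃! s, Cf hd r s x = y) := by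
  refine ⟨CAux.part1 h1 h2 hd hr2, CAux.part2 h1 h2 hd hr2, ?_,
    CAux.part4 h1 h2 hd hr2, CAux.part5 h1 h2 hd hr2, CAux.part6 h1 h2 hd hr2⟩
  intro f hf
  obtain ⟨s, rfl⟩ := CAux.part2 h1 h2 hd hr2 f hf
  obtain ⟨hL, hR⟩ := CAux.part4 h1 h2 hd hr2 s
  exact ⟨hL.injective, hR.surjective⟩
end

section
/- Let C(1,n,r) be a finite indecomposable solution of multipermutational level at most 2 with cyclic permutation group (so 0 ≤ r < n and n ∣ r²). Its automorphism group is non-cyclic if and only if n ≡ 0 (mod 4) and r ≡ 2 (mod 4). In particular, the automorphisms are f_k : i ↦ k + i(rk+1) for k ∈ ℤ/n, and f_k^j(i) = j(j−1)rk²/2 + jk(ir+1) + i for all j ≥ 0. -/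
/-- The cycle set `C(1,n,r)` on `ℤ/n`: `σ_i(j) = j + ir + 1`. -/
def sigC1 (n r : ℕ) (i j : ZMod n) : ZMod n := j + i * (r : ZMod n) + 1

/-- The map `f_k : i ↦ k + i(rk + 1)`. -/
def fC1 (n r : ℕ) (k i : ZMod n) : ZMod n := k + i * ((r : ZMod n) * k + 1)

section aux
variable (n r : ℕ)

lemma Rsq (hr2 : n ∣ r ^ 2) : (r : ZMod n) * (r : ZMod n) = 0 := by
  have : ((r ^ 2 : ℕ) : ZMod n) = 0 := (ZMod.natCast_eq_zero_iff _ _).mpr hr2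
  push_cast at this
  linear_combination this

lemma fC1_zero_apply (k : ZMod n) : fC1 n r k 0 = k := by simp [fC1]

lemma fC1_inj_index {a b : ZMod n} (h : fC1 n r a = fC1 n r b) : a = b := by
  have := congrFun h 0
  simpa [fC1] using this

lemma fC1_bij (hr2 : n ∣ r ^ 2) (k : ZMod n) : Function.Bijective (fC1 n r k) := by
  have hR := Rsq n r hr2
  refine Function.bijective_iff_has_inverse.mpr ⟨fun y => (y - k) * (1 - (r : ZMod n) * k), ?_, ?_⟩
  · intro i
    simp only [fC1]
    linear_combination (-i * k * k) * hR
  · intro y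
    simp only [fC1]
    linear_combination (-(y - k) * k * k) * hR

lemma fC1_equivariant (k i : ZMod n) :
    fC1 n r k ∘ sigC1 n r i = sigC1 n r (fC1 n r k i) ∘ fC1 n r k := by
  funext j
  simp only [Function.comp_apply, fC1, sigC1]
  ring

lemma iterate_formula (hr2 : n ∣ r ^ 2) (k i : ZMod n) (j : ℕ) :
    (fC1 n r k)^[j] i =
      ((j * (j - 1) / 2 : ℕ) : ZMod n) * (r : ZMod n) * k ^ 2 +
        (j : ZMod n) * k * (i * (r : ZMod n) + 1) + i := by
  have hR := Rsq n r hr2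
  induction j with
  | zero => simp
  | succ j ih =>
    rw [Function.iterate_succ_apply', ih]
    have hnat : (j + 1) * ((j + 1) - 1) / 2 = j * (j - 1) / 2 + j := by
      have h1 := Nat.choose_two_right (j + 1)
      have h2 := Nat.choose_two_right j
      have h3 : (j + 1).choose 2 = j.choose 1 + j.choose 2 := Nat.choose_succ_succ j 1
      simp only [Nat.choose_one_right] at h3
      omega
    rw [hnat]
    push_cast
    simp only [fC1]
    ring_nf
    linear_combination (((j * (j - 1) / 2 : ℕ) : ZMod n) * k ^ 3 + (j : ZMod n) * i * k ^ 2) * hR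

end aux

section aux2
variable (n r : ℕ)

lemma aut_eq_fC1 (hn : 0 < n) (f : ZMod n → ZMod n)
    (hcomm : ∀ i, f ∘ sigC1 n r i = sigC1 n r (f i) ∘ f) : f = fC1 n r (f 0) := by
  haveI : NeZero n := ⟨hn.ne'⟩
  have hstep : ∀ j : ZMod n, f (j + 1) = f j + f 0 * (r : ZMod n) + 1 := by
    intro j
    have := congrFun (hcomm 0) j
    simpa [sigC1, Function.comp_apply] using this
  have hm : ∀ m : ℕ, f (m : ZMod n) = fC1 n r (f 0) (m : ZMod n) := by
    intro m
    induction m with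
    | zero => simp [fC1]
    | succ m ih =>
      push_cast
      rw [hstep, ih]
      simp only [fC1]
      ring
  funext i
  obtain ⟨m, rfl⟩ := ZMod.natCast_zmod_surjective (n := n) i
  exact hm m

/-- The subscript of the j-th iterate of `f_k`. -/
noncomputable def cIdx (k : ZMod n) (j : ℕ) : ZMod n :=
  ((j * (j - 1) / 2 : ℕ) : ZMod n) * (r : ZMod n) * k ^ 2 + (j : ZMod n) * k

lemma iterate_eq_fC1 (hr2 : n ∣ r ^ 2) (k : ZMod n) (j : ℕ) :
    (fC1 n r k)^[j] = fC1 n r (cIdx n r k j) := by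
  have hR := Rsq n r hr2
  funext i
  rw [iterate_formula n r hr2]
  simp only [fC1, cIdx]
  ring_nf
  linear_combination (-((j * (j - 1) / 2 : ℕ) : ZMod n) * i * k ^ 2) * hR

end aux2

section arith

lemma coprime_of_primes {a b : ℕ} (h : ∀ p, p.Prime → p ∣ a → p ∣ b → False) :
    Nat.Coprime a b := by
  by_contra hg
  have hp := Nat.minFac_prime hg
  exact h _ hp ((Nat.minFac_dvd _).trans (Nat.gcd_dvd_left a b))
    ((Nat.minFac_dvd _).trans (Nat.gcd_dvd_right a b))

/-- the natural number identity splitting off the factor d when r = 2u -/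
lemma nat_split (d u : ℕ) : d * (d - 1) / 2 * (2 * u) + d = d * ((d - 1) * u + 1) := by
  have h2 : 2 ∣ d * (d - 1) := by
    rcases Nat.even_or_odd d with hd | hd
    · exact Dvd.dvd.mul_right hd.two_dvd _
    · exact Dvd.dvd.mul_left (Nat.Odd.sub_odd hd odd_one).two_dvd _
  have : d * (d - 1) / 2 * (2 * u) = d * (d - 1) * u := by
    rw [← mul_assoc, mul_comm (d * (d-1) / 2) 2, Nat.mul_div_cancel' h2]
  rw [this]; ring

/-- cyclic case key lemma -/
lemma cIdx_ne_zero (n r : ℕ) (hn : 0 < n) (hr2 : n ∣ r ^ 2)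
    (hyp : ¬(n % 4 = 0 ∧ r % 4 = 2)) (d : ℕ) (hd0 : 0 < d) (hdn : d < n) :
    cIdx n r 1 d ≠ 0 := by
  intro h0
  have hdvd : n ∣ d * (d - 1) / 2 * r + d := by
    have : ((d * (d - 1) / 2 * r + d : ℕ) : ZMod n) = 0 := by
      push_cast
      simpa [cIdx] using h0
    exact (ZMod.natCast_eq_zero_iff _ _).mp this
  have hnd : ¬ n ∣ d := fun h => absurd (Nat.le_of_dvd hd0 h) (not_le.mpr hdn)
  rcases Nat.even_or_odd n with hne | hno
  · -- n even, hence r even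
    obtain ⟨u, hu⟩ : 2 ∣ r := by
      have h2n : (2 : ℕ) ∣ n := hne.two_dvd
      exact Nat.Prime.dvd_of_dvd_pow Nat.prime_two (h2n.trans hr2)
    rw [hu, nat_split] at hdvd
    set w := (d - 1) * u + 1 with hw
    -- any odd prime dividing n divides u
    have hodd_p : ∀ p, p.Prime → p ∣ n → p ≠ 2 → p ∣ u := by
      intro p hp hpn hp2
      have hpr : p ∣ 2 * u := hu ▸ hp.dvd_of_dvd_pow (hpn.trans hr2)
      rcases (Nat.Prime.dvd_mul hp).mp hpr with h | h
      · exact absurd ((Nat.prime_dvd_prime_iff_eq hp Nat.prime_two).mp h) hp2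
      · exact h
    have hpu_w : ∀ p, p.Prime → p ∣ w → p ∣ u → False := by
      intro p hp hpw hpu
      have h1 : p ∣ w - (d - 1) * u := Nat.dvd_sub hpw (hpu.mul_left _)
      have : w - (d - 1) * u = 1 := by omega
      rw [this] at h1
      exact hp.one_lt.ne' (Nat.dvd_one.mp h1)
    rcases Nat.even_or_odd u with hue | huo
    · -- u even : w coprime to n
      have hco : Nat.Coprime w n := by
        apply coprime_of_primes
        intro p hp hpw hpn
        by_cases hp2 : p = 2
        · subst hp2
          have hwodd : Odd w := (hue.mul_left _).add_one
          exact (Nat.not_even_iff_odd.mpr hwodd) (even_iff_two_dvd.mpr hpw)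
        · exact hpu_w p hp hpw (hodd_p p hp hpn hp2)
      exact hnd (hco.symm.dvd_of_dvd_mul_right hdvd)
    · -- u odd : then r % 4 = 2, so n % 4 ≠ 0, so n = 2 * m with m odd
      have hr4 : r % 4 = 2 := by obtain ⟨t, ht⟩ := huo; omega
      have hn4 : n % 4 ≠ 0 := fun h => hyp ⟨h, hr4⟩
      obtain ⟨m, hm⟩ := hne
      have hmodd : Odd m := by
        rcases Nat.even_or_odd m with ⟨t, ht⟩ | h
        · omega
        · exact h
      -- m ∣ d * w, m coprime to w
      have hco : Nat.Coprime w m := by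
        apply coprime_of_primes
        intro p hp hpw hpm
        have hp2 : p ≠ 2 := by
          rintro rfl
          exact (Nat.not_even_iff_odd.mpr hmodd) (even_iff_two_dvd.mpr hpm)
        exact hpu_w p hp hpw (hodd_p p hp (hpm.trans ⟨2, by omega⟩) hp2)
      have hmd : m ∣ d := by
        have : m ∣ d * w := dvd_trans ⟨2, by omega⟩ hdvd
        exact hco.symm.dvd_of_dvd_mul_right this
      have h2d : 2 ∣ d := by
        rcases Nat.even_or_odd d with he | ho
        · exact he.two_dvd
        · exfalso
          have hwodd : Odd w := by
            have : Even ((d - 1) * u) := (Nat.Odd.sub_odd ho odd_one).mul_right _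
            exact this.add_one
          have : Odd (d * w) := ho.mul hwodd
          have h2dw : 2 ∣ d * w := dvd_trans ⟨m, by omega⟩ hdvd
          exact (Nat.not_even_iff_odd.mpr this) (even_iff_two_dvd.mpr h2dw)
      have : n ∣ d := by
        have hco2 : Nat.Coprime 2 m := Nat.coprime_two_left.mpr hmodd
        have hm2 : n = 2 * m := by omega
        rw [hm2]
        exact Nat.Coprime.mul_dvd_of_dvd_of_dvd hco2 h2d hmd
      exact hnd this
  · -- n odd
    have h2 : n ∣ d * ((d - 1) * r + 2) := by
      have e : d * ((d - 1) * r + 2) = 2 * (d * (d - 1) / 2 * r + d) := by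
        have h2 : 2 ∣ d * (d - 1) := by
          rcases Nat.even_or_odd d with hd | hd
          · exact Dvd.dvd.mul_right hd.two_dvd _
          · exact Dvd.dvd.mul_left (Nat.Odd.sub_odd hd odd_one).two_dvd _
        have : d * (d - 1) / 2 * 2 = d * (d - 1) := Nat.div_mul_cancel h2
        calc d * ((d - 1) * r + 2) = d * (d - 1) * r + 2 * d := by ring
        _ = d * (d - 1) / 2 * 2 * r + 2 * d := by rw [this]
        _ = 2 * (d * (d - 1) / 2 * r + d) := by ring
      rw [e]
      exact hdvd.mul_left 2
    have hco : Nat.Coprime ((d - 1) * r + 2) n := by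
      apply coprime_of_primes
      intro p hp hpw hpn
      have hp2 : p ≠ 2 := by
        rintro rfl
        exact (Nat.not_even_iff_odd.mpr hno) (even_iff_two_dvd.mpr hpn)
      have hpr : p ∣ r := hp.dvd_of_dvd_pow (hpn.trans hr2)
      have h1 : p ∣ ((d - 1) * r + 2) - (d - 1) * r := Nat.dvd_sub hpw (hpr.mul_left _)
      have : ((d - 1) * r + 2) - (d - 1) * r = 2 := by omega
      rw [this] at h1
      exact hp2 ((Nat.prime_dvd_prime_iff_eq hp Nat.prime_two).mp h1)
    exact hnd (hco.symm.dvd_of_dvd_mul_right h2)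

end arith

/-- noncyclic case key lemma: every `f_k` has order dividing n/2. -/
lemma cIdx_half_eq_zero (n r : ℕ) (hn : 0 < n) (hn4 : n % 4 = 0) (hr4 : r % 4 = 2)
    (k : ZMod n) : cIdx n r k (n / 2) = 0 := by
  haveI : NeZero n := ⟨hn.ne'⟩
  obtain ⟨t, ht⟩ : 4 ∣ n := Nat.dvd_of_mod_eq_zero hn4
  have ht1 : 1 ≤ t := by omega
  obtain ⟨s, hs⟩ : ∃ s, r = 4 * s + 2 := ⟨r / 4, by omega⟩
  set K := k.val with hK
  have hk : (K : ZMod n) = k := by simp [hK, ZMod.natCast_val, ZMod.cast_id]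
  have key : n ∣ n / 2 * (n / 2 - 1) / 2 * r * K ^ 2 + n / 2 * K := by
    have hh : n / 2 = 2 * t := by omega
    have hb : 2 * t * (2 * t - 1) / 2 = t * (2 * t - 1) := by
      have e : 2 * t * (2 * t - 1) = 2 * (t * (2 * t - 1)) := by ring
      rw [e, Nat.mul_div_cancel_left _ two_pos]
    rw [hh, hb, hs]
    have h2 : 2 ∣ K * ((2 * t - 1) * (2 * s + 1) * K + 1) := by
      rcases Nat.even_or_odd K with he | ho
      · exact Dvd.dvd.mul_right he.two_dvd _
      · have hodd : Odd ((2 * t - 1) * (2 * s + 1) * K) :=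
          (Odd.mul ⟨t - 1, by omega⟩ ⟨s, by ring⟩).mul ho
        exact Dvd.dvd.mul_left hodd.add_one.two_dvd _
    obtain ⟨c, hc⟩ := h2
    have e : t * (2 * t - 1) * (4 * s + 2) * K ^ 2 + 2 * t * K =
        2 * t * (K * ((2 * t - 1) * (2 * s + 1) * K + 1)) := by ring
    rw [ht, e, hc]
    exact ⟨c, by ring⟩
  have ecast : cIdx n r k (n / 2) =
      ((n / 2 * (n / 2 - 1) / 2 * r * K ^ 2 + n / 2 * K : ℕ) : ZMod n) := by
    rw [cIdx, ← hk]
    push_cast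
    ring
  rw [ecast, ZMod.natCast_eq_zero_iff]
  exact key

/-- the automorphisms of `C(1,n,r)` are exactly the maps `f_k`,
`f_k^j(i) = j(j-1)rk²/2 + jk(ir+1) + i`, and the automorphism group is non-cyclic
iff `n ≡ 0 (mod 4)` and `r ≡ 2 (mod 4)`. -/
theorem C1_aut_noncyclic_iff (n r : ℕ) (hn : 0 < n) (hr : r < n) (hr2 : n ∣ r ^ 2) :
    (∀ k : ZMod n, Function.Bijective (fC1 n r k) ∧
      ∀ i, fC1 n r k ∘ sigC1 n r i = sigC1 n r (fC1 n r k i) ∘ fC1 n r k) ∧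
    (∀ f : ZMod n → ZMod n, Function.Bijective f →
      (∀ i, f ∘ sigC1 n r i = sigC1 n r (f i) ∘ f) → ∃ k, f = fC1 n r k) ∧
    (∀ (k i : ZMod n) (j : ℕ), (fC1 n r k)^[j] i =
      ((j * (j - 1) / 2 : ℕ) : ZMod n) * (r : ZMod n) * k ^ 2 +
        (j : ZMod n) * k * (i * (r : ZMod n) + 1) + i) ∧
    (¬(∃ k : ZMod n, ∀ m : ZMod n, ∃ j : ℕ, (fC1 n r k)^[j] = fC1 n r m) ↔
      (n % 4 = 0 ∧ r % 4 = 2)) := by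
  haveI : NeZero n := ⟨hn.ne'⟩
  refine ⟨fun k => ⟨fC1_bij n r hr2 k, fC1_equivariant n r k⟩,
    fun f _hf hcomm => ⟨f 0, aut_eq_fC1 n r hn f hcomm⟩,
    fun k i j => iterate_formula n r hr2 k i j, ?_, ?_⟩
  · -- noncyclic → conditions (contrapositive)
    intro hnc
    by_contra hyp
    apply hnc
    refine ⟨1, fun m => ?_⟩
    have cancel : ∀ a b : ℕ, a ≤ b → cIdx n r 1 a = cIdx n r 1 b →
        cIdx n r 1 (b - a) = 0 := by
      intro a b hab he
      have hco : (fC1 n r 1)^[a] ∘ (fC1 n r 1)^[b - a] = (fC1 n r 1)^[a] := by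
        rw [← Function.iterate_add, Nat.add_sub_cancel' hab,
          iterate_eq_fC1 n r hr2, iterate_eq_fC1 n r hr2, he]
      have hid : (fC1 n r 1)^[b - a] = id := by
        funext z
        exact ((fC1_bij n r hr2 1).injective.iterate a) (congrFun hco z)
      have := congrFun ((iterate_eq_fC1 n r hr2 1 (b - a)).symm.trans hid) 0
      simpa [fC1] using this
    have hgsurj : Function.Surjective (fun x : ZMod n => cIdx n r 1 x.val) := by
      apply Finite.injective_iff_surjective.mp
      intro x y hxy
      have key : ∀ a b : ZMod n, a.val ≤ b.val →
          cIdx n r 1 a.val = cIdx n r 1 b.val → a = b := by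
        intro a b hab he
        have h0 : b.val - a.val = 0 := by
          by_contra h0
          exact cIdx_ne_zero n r hn hr2 hyp _ (Nat.pos_of_ne_zero h0)
            (lt_of_le_of_lt (Nat.sub_le _ _) (ZMod.val_lt b)) (cancel _ _ hab he)
        have : a.val = b.val := by omega
        exact ZMod.val_injective n this
      rcases le_total x.val y.val with h | h
      · exact key x y h hxy
      · exact (key y x h hxy.symm).symm
    obtain ⟨x, hx⟩ := hgsurj m
    exact ⟨x.val, by simp only at hx; rw [iterate_eq_fC1 n r hr2, hx]⟩
  · rintro ⟨hn4, hr4⟩ ⟨k, hk⟩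
    set h := n / 2 with hh
    have hh0 : 0 < h := by omega
    have hhalf : (fC1 n r k)^[h] = id := by
      rw [iterate_eq_fC1 n r hr2, cIdx_half_eq_zero n r hn hn4 hr4]
      funext i
      simp [fC1]
    have hper : ∀ j, (fC1 n r k)^[j] = (fC1 n r k)^[j % h] := by
      intro j
      conv_lhs => rw [← Nat.div_add_mod j h]
      rw [Function.iterate_add, Function.iterate_mul, hhalf, Function.iterate_id,
        Function.id_comp]
    have huniv : (Finset.univ : Finset (ZMod n)) ⊆
        (Finset.range h).image (fun s => (fC1 n r k)^[s] 0) := by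
      intro m _
      obtain ⟨j, hj⟩ := hk m
      refine Finset.mem_image.mpr ⟨j % h, Finset.mem_range.mpr (Nat.mod_lt _ hh0), ?_⟩
      rw [← hper, hj]
      simp [fC1]
    have hcard := Finset.card_le_card huniv
    have h1 : ((Finset.range h).image (fun s => (fC1 n r k)^[s] 0)).card ≤ h :=
      (Finset.card_image_le).trans (by simp)
    rw [Finset.card_univ, ZMod.card] at hcard
    omega
end
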